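/- arXiv:1908.04189 — 12 statements merged into one kernel-verified Lean document; each statement's English description precedes it below -/
import Mathlib

section
/- Every finite graph with no isolated vertex contains two disjoint dominating sets; equivalently, its vertex set can be partitioned into two dominating sets. -/
open SimpleGraph

variable {V : Type*}

/-- `D` is a dominating set of `G`. -/
def Dominating (G : SimpleGraph V) (D : Set V) : Prop :=
  ∀ v ∉ D, ∃ u ∈ D, G.Adj v u

/-- `P` is a paired-dominating set of `G`: it is dominating and the induced
subgraph `G[P]` contains a perfect matching (given by an involutive pairing of
the vertices of `P` along edges inside `P`). -/
def PairedDominating (G : SimpleGraph V) (P : Set V) : Prop :=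
  Dominating G P ∧ ∃ m : V → V, ∀ v ∈ P, m v ∈ P ∧ G.Adj v (m v) ∧ m (m v) = v

/-- `(D, P)` is a DP-pair: a partition of the vertex set into a dominating set `D`
and a paired-dominating set `P`. -/
def IsDPPair (G : SimpleGraph V) (D P : Set V) : Prop :=
  Disjoint D P ∧ D ∪ P = Set.univ ∧ Dominating G D ∧ PairedDominating G P

/-- `G` is a DPDP-graph: its vertex set partitions into a dominating set and a
paired-dominating set. -/
def IsDPDP (G : SimpleGraph V) : Prop := ∃ D P, IsDPPair G D P

/-- A minimal DPDP-graph: a DPDP-graph no proper spanning subgraph of which is DPDP. -/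
def IsMinimalDPDP (G : SimpleGraph V) : Prop :=
  IsDPDP G ∧ ∀ G' : SimpleGraph V, G' < G → ¬ IsDPDP G'

/-- A leaf is a vertex of degree 1. -/
def IsLeaf (G : SimpleGraph V) (v : V) : Prop := (G.neighborSet v).ncard = 1

/-- A support vertex is a vertex adjacent to at least one leaf. -/
def IsSupport (G : SimpleGraph V) (v : V) : Prop := ∃ u, G.Adj v u ∧ IsLeaf G u

/-
A maximal independent set `D` dominates the graph, since any vertex outside it with no neighbour
in `D` could be added to `D`. Its complement dominates as well: every vertex of `D` has a
neighbour, and that neighbour lies outside `D` because `D` is independent.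
-/

namespace SimpleGraph

variable {G : SimpleGraph V} {D : Set V}

theorem exists_maximal_isIndepSet (G : SimpleGraph V) : ∃ D, Maximal G.IsIndepSet D :=
  zorn_subset {s | G.IsIndepSet s} fun c hcS hc =>
    ⟨⋃₀ c, hc.pairwise_sUnion.2 hcS, fun _ => Set.subset_sUnion_of_mem⟩

theorem dominating_of_maximal_isIndepSet (hD : Maximal G.IsIndepSet D) : Dominating G D := by
  intro v hv
  by_contra! hvD
  have hins : G.IsIndepSet (insert v D) :=
    hD.prop.insert fun u hu _ => ⟨hvD u hu, fun huv => hvD u hu huv.symm⟩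
  exact hv (hD.mem_of_prop_insert hins)

theorem IsIndepSet.dominating_compl (hD : G.IsIndepSet D) (hG : ∀ v, ∃ u, G.Adj v u) :
    Dominating G Dᶜ := by
  intro v hv
  obtain ⟨u, hvu⟩ := hG v
  have hvD : v ∈ D := not_not.1 hv
  exact ⟨u, fun huD => hD hvD huD hvu.ne hvu, hvu⟩

end SimpleGraph

theorem stmt0_general {V : Type*} (G : SimpleGraph V)
    (h : ∀ v : V, ∃ u, G.Adj v u) :
    ∃ D P : Set V, Disjoint D P ∧ D ∪ P = Set.univ ∧
      Dominating G D ∧ Dominating G P := by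
  obtain ⟨D, hD⟩ := G.exists_maximal_isIndepSet
  exact ⟨D, Dᶜ, disjoint_compl_right, Set.union_compl_self D,
    dominating_of_maximal_isIndepSet hD, hD.prop.dominating_compl h⟩

/-- Every finite graph with no isolated vertex contains two disjoint dominating
sets partitioning its vertex set. -/
theorem stmt0 {V : Type*} [Fintype V] (G : SimpleGraph V)
    (h : ∀ v : V, ∃ u, G.Adj v u) :
    ∃ D P : Set V, Disjoint D P ∧ D ∪ P = Set.univ ∧
      Dominating G D ∧ Dominating G P :=
  stmt0_general G h
end

section
/- A cycle C_n (n ≥ 3) is a DPDP-graph if and only if n ≠ 5; that is, the vertex set of C_n can be partitioned into a dominating set and a paired-dominating set exactly when n ≠ 5. -/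
open SimpleGraph

variable {V : Type*}

/-- Membership of position `i` in the paired-dominating set for `C_n`. -/
def InP (n i : ℕ) : Prop :=
  (i < 4*(n%3) ∧ 2 ≤ i % 4) ∨ (4*(n%3) ≤ i ∧ 1 ≤ (i - 4*(n%3)) % 3)

/-- `i` is the first vertex of its matched pair. -/
def FirstP (n i : ℕ) : Prop :=
  (i < 4*(n%3) ∧ i % 4 = 2) ∨ (4*(n%3) ≤ i ∧ (i - 4*(n%3)) % 3 = 1)

instance (n i : ℕ) : Decidable (InP n i) := by unfold InP; infer_instance
instance (n i : ℕ) : Decidable (FirstP n i) := by unfold FirstP; infer_instance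

lemma key_P_dom {n i : ℕ} (hn : 3 ≤ n) (h5 : n ≠ 5) (hi : i < n) (h : ¬ InP n i) :
    InP n (if i + 1 = n then 0 else i + 1) ∨ InP n (if i = 0 then n - 1 else i - 1) := by
  unfold InP at *; split_ifs <;> omega

lemma key_D_dom {n i : ℕ} (hn : 3 ≤ n) (h5 : n ≠ 5) (hi : i < n) (h : InP n i) :
    ¬ InP n (if i + 1 = n then 0 else i + 1) ∨ ¬ InP n (if i = 0 then n - 1 else i - 1) := by
  unfold InP at *; split_ifs <;> omega

lemma key_match_first {n i : ℕ} (hn : 3 ≤ n) (h5 : n ≠ 5) (hi : i < n)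
    (h : InP n i) (hf : FirstP n i) :
    i + 1 < n ∧ InP n (i+1) ∧ ¬ FirstP n (i+1) := by
  unfold InP FirstP at *; omega

lemma key_match_second {n i : ℕ} (hn : 3 ≤ n) (h5 : n ≠ 5) (hi : i < n)
    (h : InP n i) (hf : ¬ FirstP n i) :
    1 ≤ i ∧ InP n (i-1) ∧ FirstP n (i-1) := by
  unfold InP FirstP at *; omega

section FinLemmas
variable {m : ℕ}

lemma val_add_one (v : Fin (m+3)) :
    (v+1).val = if v.val + 1 = m + 3 then 0 else v.val + 1 := by
  simp only [Fin.add_def, Fin.val_one, Fin.val_mk]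
  split_ifs with h
  · rw [h, Nat.mod_self]
  · exact Nat.mod_eq_of_lt (by omega)

lemma val_sub_one (v : Fin (m+3)) :
    (v-1).val = if v.val = 0 then m + 2 else v.val - 1 := by
  simp only [Fin.sub_def, Fin.val_one, Fin.val_mk]
  split_ifs with h
  · rw [h]; exact Nat.mod_eq_of_lt (by omega)
  · have h2 : m + 3 - 1 + v.val = (v.val - 1) + (m + 3) := by omega
    rw [h2, Nat.add_mod_right]
    exact Nat.mod_eq_of_lt (by omega)

lemma adj_succ (v : Fin (m+3)) : (cycleGraph (m+3)).Adj v (v+1) := by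
  have : (cycleGraph ((m+1)+2)).Adj v (v+1) := by
    rw [SimpleGraph.cycleGraph_adj]; right; simp
  exact this

lemma adj_pred (v : Fin (m+3)) : (cycleGraph (m+3)).Adj v (v-1) := by
  have := (adj_succ (v-1)).symm
  simpa using this

end FinLemmas

lemma c5_not : ¬ IsDPDP (cycleGraph 5) := by
  classical
  rintro ⟨D, P, hdisj, huniv, hD, hPdom, mm, hm⟩
  have key : ¬ ∃ p : Fin 5 → Bool,
      (∀ v, p v = true → ∃ u, p u = false ∧ (cycleGraph 5).Adj v u) ∧
      (∀ v, p v = false → ∃ u, p u = true ∧ (cycleGraph 5).Adj v u) ∧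
      (∀ v, p v = true → ∃ u, p u = true ∧ (cycleGraph 5).Adj v u) := by decide
  apply key
  refine ⟨fun v => decide (v ∈ P), ?_, ?_, ?_⟩
  · intro v hv
    have hvP : v ∈ P := of_decide_eq_true hv
    have hvD : v ∉ D := Set.disjoint_right.mp hdisj hvP
    obtain ⟨u, huD, hadj⟩ := hD v hvD
    exact ⟨u, decide_eq_false (Set.disjoint_left.mp hdisj huD), hadj⟩
  · intro v hv
    have hvP : v ∉ P := fun h => by simp [h] at hv
    obtain ⟨u, huP, hadj⟩ := hPdom v hvP
    exact ⟨u, decide_eq_true huP, hadj⟩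
  · intro v hv
    have hvP : v ∈ P := of_decide_eq_true hv
    obtain ⟨h1, h2, _⟩ := hm v hvP
    exact ⟨mm v, decide_eq_true h1, h2⟩

/-- The cycle `C_n` (`n ≥ 3`) is a DPDP-graph if and only if `n ≠ 5`. -/
theorem stmt1 (n : ℕ) (hn : 3 ≤ n) :
    IsDPDP (SimpleGraph.cycleGraph n) ↔ n ≠ 5 := by
  constructor
  · rintro h rfl
    exact c5_not h
  · intro h5
    obtain ⟨m, rfl⟩ : ∃ m, n = m + 3 := ⟨n - 3, by omega⟩
    classical
    set n := m + 3 with hn3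
    refine ⟨{v : Fin n | ¬ InP n v.val}, {v : Fin n | InP n v.val}, ?_, ?_, ?_, ?_, ?_⟩
    · rw [Set.disjoint_left]; intro a ha hb; exact ha hb
    · ext v; simp [em' (InP n v.val)]
    · -- D dominating
      intro v hv
      have hvP : InP n v.val := not_not.mp hv
      rcases key_D_dom hn h5 v.isLt hvP with h | h
      · exact ⟨v + 1, by rw [Set.mem_setOf_eq, val_add_one]; exact h, adj_succ v⟩
      · exact ⟨v - 1, by rw [Set.mem_setOf_eq, val_sub_one]; exact h, adj_pred v⟩
    · -- P dominating
      intro v hv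
      have hvD : ¬ InP n v.val := hv
      rcases key_P_dom hn h5 v.isLt hvD with h | h
      · exact ⟨v + 1, by rw [Set.mem_setOf_eq, val_add_one]; exact h, adj_succ v⟩
      · exact ⟨v - 1, by rw [Set.mem_setOf_eq, val_sub_one]; exact h, adj_pred v⟩
    · -- matching
      refine ⟨fun v => if FirstP n v.val then v + 1 else v - 1, fun v hv => ?_⟩
      have hvP : InP n v.val := hv
      dsimp only
      by_cases hf : FirstP n v.val
      · obtain ⟨hlt, hP1, hnf1⟩ := key_match_first hn h5 v.isLt hvP hf
        have hval : ((v+1) : Fin n).val = v.val + 1 := by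
          rw [val_add_one]; exact if_neg (by omega)
        have hnf1' : ¬ FirstP n ((v+1) : Fin n).val := by rw [hval]; exact hnf1
        simp only [if_pos hf, if_neg hnf1']
        refine ⟨?_, adj_succ v, add_sub_cancel_right v 1⟩
        rw [Set.mem_setOf_eq, hval]; exact hP1
      · obtain ⟨hge, hP1, hf1⟩ := key_match_second hn h5 v.isLt hvP hf
        have hval : ((v-1) : Fin n).val = v.val - 1 := by
          rw [val_sub_one]; exact if_neg (by omega)
        have hf1' : FirstP n ((v-1) : Fin n).val := by rw [hval]; exact hf1
        simp only [if_neg hf, if_pos hf1']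
        refine ⟨?_, adj_pred v, sub_add_cancel v 1⟩
        rw [Set.mem_setOf_eq, hval]; exact hP1
end

section
/- The path P_n is a DPDP-graph if and only if n ∉ {1, 2, 3, 5, 6, 9}. -/
open SimpleGraph

variable {V : Type*}

/-! ### Auxiliary material -/

instance pathAdjDec (n : ℕ) : DecidableRel (SimpleGraph.pathGraph n).Adj :=
  fun _ _ => decidable_of_iff _ pathGraph_adj.symm

/-- A decidable necessary condition for `pathGraph n` to be DPDP, phrased for
`D` a finset and `P = Dᶜ`. -/
def QPath (n : ℕ) (D : Finset (Fin n)) : Prop :=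
  ∀ v : Fin n,
    (v ∉ D → (∃ u ∈ D, (pathGraph n).Adj v u) ∧ ∃ u, u ∉ D ∧ (pathGraph n).Adj v u) ∧
    (v ∈ D → ∃ u, u ∉ D ∧ (pathGraph n).Adj v u)

instance (n : ℕ) (D : Finset (Fin n)) : Decidable (QPath n D) := by
  unfold QPath; infer_instance

lemma dpdp_qpath {n : ℕ} (h : IsDPDP (pathGraph n)) : ∃ D : Finset (Fin n), QPath n D := by
  obtain ⟨D, P, hdisj, huniv, hD, hPdom, m, hm⟩ := h
  have hmem : ∀ v : Fin n, v ∈ P ↔ v ∉ D := by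
    intro v
    constructor
    · intro hv hvD
      exact Set.disjoint_left.mp hdisj hvD hv
    · intro hv
      have : v ∈ D ∪ P := huniv ▸ Set.mem_univ v
      rcases this with h' | h'
      · exact absurd h' hv
      · exact h'
  refine ⟨(Set.toFinite D).toFinset, fun v => ⟨fun hv => ?_, fun hv => ?_⟩⟩
  · rw [Set.Finite.mem_toFinset] at hv
    constructor
    · obtain ⟨u, hu, hadj⟩ := hD v hv
      exact ⟨u, (Set.Finite.mem_toFinset _).mpr hu, hadj⟩
    · have hvP : v ∈ P := (hmem v).mpr hv
      obtain ⟨h1, h2, _⟩ := hm v hvP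
      exact ⟨m v, by rw [Set.Finite.mem_toFinset]; exact (hmem _).mp h1, h2⟩
  · rw [Set.Finite.mem_toFinset] at hv
    have hvP : v ∉ P := fun h' => (hmem v).mp h' hv
    obtain ⟨u, hu, hadj⟩ := hPdom v hvP
    exact ⟨u, by rw [Set.Finite.mem_toFinset]; exact (hmem u).mp hu, hadj⟩

/-- The matching used in the base construction on `P_{3k+4}`. -/
def baseMatch (k : ℕ) (v : Fin (3 * k + 4)) : Fin (3 * k + 4) :=
  if h : (v : ℕ) % 3 = 1 then ⟨(v : ℕ) + 1, by have := v.isLt; omega⟩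
  else ⟨(v : ℕ) - 1, by have := v.isLt; omega⟩

lemma base_dpdp (k : ℕ) : IsDPDP (pathGraph (3 * k + 4)) := by
  refine ⟨{v | (v : ℕ) % 3 = 0}, {v | (v : ℕ) % 3 ≠ 0}, ?_, ?_, ?_, ?_, baseMatch k, ?_⟩
  · rw [Set.disjoint_left]
    intro v hv hv'
    exact hv' hv
  · ext v
    simp only [Set.mem_union, Set.mem_setOf_eq, Set.mem_univ, iff_true]
    omega
  · -- D dominating
    intro v hv
    simp only [Set.mem_setOf_eq] at hv
    have hlt := v.isLt
    by_cases h1 : (v : ℕ) % 3 = 1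
    · refine ⟨⟨(v : ℕ) - 1, by omega⟩, by simp only [Set.mem_setOf_eq]; omega, ?_⟩
      rw [pathGraph_adj]; right; simp; omega
    · refine ⟨⟨(v : ℕ) + 1, by omega⟩, by simp only [Set.mem_setOf_eq]; omega, ?_⟩
      rw [pathGraph_adj]; left; simp
  · -- P dominating
    intro v hv
    simp only [Set.mem_setOf_eq, not_not] at hv
    have hlt := v.isLt
    by_cases h1 : (v : ℕ) + 1 < 3 * k + 4
    · refine ⟨⟨(v : ℕ) + 1, h1⟩, by simp only [Set.mem_setOf_eq]; omega, ?_⟩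
      rw [pathGraph_adj]; left; simp
    · refine ⟨⟨(v : ℕ) - 1, by omega⟩, by simp only [Set.mem_setOf_eq]; omega, ?_⟩
      rw [pathGraph_adj]; right; simp; omega
  · -- matching
    intro v hv
    simp only [Set.mem_setOf_eq] at hv
    have hlt := v.isLt
    unfold baseMatch
    by_cases h1 : (v : ℕ) % 3 = 1
    · rw [dif_pos h1]
      have h2 : ((v : ℕ) + 1) % 3 = 2 := by omega
      refine ⟨by simp only [Set.mem_setOf_eq]; simpa using by omega, ?_, ?_⟩
      · rw [pathGraph_adj]; left; simp
      · rw [dif_neg (by simpa using by omega)]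
        apply Fin.ext; simp
    · rw [dif_neg h1]
      have hv2 : (v : ℕ) % 3 = 2 := by omega
      refine ⟨by simp only [Set.mem_setOf_eq]; simpa using by omega, ?_, ?_⟩
      · rw [pathGraph_adj]; right; simp; omega
      · rw [dif_pos (by simpa using by omega)]
        apply Fin.ext; simp; omega

/-- Lift from the left part of a concatenated path. -/
def liftL {a b : ℕ} (u : Fin a) : Fin (a + b) := ⟨(u : ℕ), by have := u.isLt; omega⟩

/-- Lift from the right part of a concatenated path. -/
def liftR {a b : ℕ} (u : Fin b) : Fin (a + b) := ⟨a + (u : ℕ), by have := u.isLt; omega⟩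

lemma lift_cases {a b : ℕ} (v : Fin (a + b)) :
    (∃ u : Fin a, v = liftL u) ∨ (∃ u : Fin b, v = liftR u) := by
  by_cases h : (v : ℕ) < a
  · exact Or.inl ⟨⟨(v : ℕ), h⟩, Fin.ext rfl⟩
  · refine Or.inr ⟨⟨(v : ℕ) - a, by have := v.isLt; omega⟩, Fin.ext ?_⟩
    show (v : ℕ) = a + ((v : ℕ) - a)
    omega

/-- Splitting a set over a concatenation of two paths. -/
def setSplit {a b : ℕ} (S : Set (Fin a)) (T : Set (Fin b)) : Set (Fin (a + b)) :=
  {v | if h : (v : ℕ) < a then (⟨(v : ℕ), h⟩ : Fin a) ∈ S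
       else (⟨(v : ℕ) - a, by have := v.isLt; omega⟩ : Fin b) ∈ T}

lemma mem_split_liftL {a b : ℕ} {S : Set (Fin a)} {T : Set (Fin b)} {u : Fin a} :
    (liftL u : Fin (a + b)) ∈ setSplit S T ↔ u ∈ S := by
  have h : ((liftL u : Fin (a + b)) : ℕ) < a := u.isLt
  simp only [setSplit, Set.mem_setOf_eq, dif_pos h]
  exact Iff.of_eq (congrArg (· ∈ S) (Fin.ext rfl))

lemma mem_split_liftR {a b : ℕ} {S : Set (Fin a)} {T : Set (Fin b)} {u : Fin b} :
    (liftR u : Fin (a + b)) ∈ setSplit S T ↔ u ∈ T := by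
  have h : ¬ ((liftR (a := a) u : Fin (a + b)) : ℕ) < a := by
    show ¬ a + (u : ℕ) < a; omega
  simp only [setSplit, Set.mem_setOf_eq, dif_neg h]
  refine Iff.of_eq (congrArg (· ∈ T) (Fin.ext ?_))
  show a + (u : ℕ) - a = (u : ℕ)
  omega

lemma adj_liftL {a b : ℕ} {u w : Fin a} (h : (pathGraph a).Adj u w) :
    (pathGraph (a + b)).Adj (liftL u) (liftL w) := by
  rw [pathGraph_adj] at h ⊢
  exact h

lemma adj_liftR {a b : ℕ} {u w : Fin b} (h : (pathGraph b).Adj u w) :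
    (pathGraph (a + b)).Adj (liftR (a := a) u) (liftR (a := a) w) := by
  rw [pathGraph_adj] at h ⊢
  show a + (u : ℕ) + 1 = a + (w : ℕ) ∨ a + (w : ℕ) + 1 = a + (u : ℕ)
  omega

/-- Splitting a matching over a concatenation of two paths. -/
def matchSplit {a b : ℕ} (ma : Fin a → Fin a) (mb : Fin b → Fin b) (v : Fin (a + b)) :
    Fin (a + b) :=
  if h : (v : ℕ) < a then liftL (ma ⟨(v : ℕ), h⟩)
  else liftR (mb ⟨(v : ℕ) - a, by have := v.isLt; omega⟩)

lemma matchSplit_liftL {a b : ℕ} (ma : Fin a → Fin a) (mb : Fin b → Fin b) (u : Fin a) :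
    matchSplit ma mb (liftL u : Fin (a + b)) = liftL (ma u) := by
  have h : ((liftL u : Fin (a + b)) : ℕ) < a := u.isLt
  unfold matchSplit
  rw [dif_pos h]
  have harg : (⟨((liftL u : Fin (a + b)) : ℕ), h⟩ : Fin a) = u := Fin.ext rfl
  rw [harg]

lemma matchSplit_liftR {a b : ℕ} (ma : Fin a → Fin a) (mb : Fin b → Fin b) (u : Fin b) :
    matchSplit ma mb (liftR u : Fin (a + b)) = liftR (mb u) := by
  have h : ¬ ((liftR (a := a) u : Fin (a + b)) : ℕ) < a := by
    show ¬ a + (u : ℕ) < a; omega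
  unfold matchSplit
  rw [dif_neg h]
  have harg : (⟨((liftR (a := a) u : Fin (a + b)) : ℕ) - a,
      by have := (liftR (a := a) u).isLt; omega⟩ : Fin b) = u :=
    Fin.ext (by show a + (u : ℕ) - a = (u : ℕ); omega)
  rw [harg]

lemma glue_dpdp {a b : ℕ} (ha : IsDPDP (pathGraph a)) (hb : IsDPDP (pathGraph b)) :
    IsDPDP (pathGraph (a + b)) := by
  obtain ⟨Da, Pa, hdja, huva, hDa, hPa, ma, hma⟩ := ha
  obtain ⟨Db, Pb, hdjb, huvb, hDb, hPb, mb, hmb⟩ := hb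
  have hmemA : ∀ v : Fin a, v ∈ Da ∨ v ∈ Pa := fun v => by
    have : v ∈ Da ∪ Pa := huva ▸ Set.mem_univ v; exact this
  have hmemB : ∀ v : Fin b, v ∈ Db ∨ v ∈ Pb := fun v => by
    have : v ∈ Db ∪ Pb := huvb ▸ Set.mem_univ v; exact this
  refine ⟨setSplit Da Db, setSplit Pa Pb, ?_, ?_, ?_, ?_, matchSplit ma mb, ?_⟩
  · rw [Set.disjoint_left]
    intro v hv hv'
    rcases lift_cases v with ⟨u, rfl⟩ | ⟨u, rfl⟩
    · rw [mem_split_liftL] at hv hv'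
      exact Set.disjoint_left.mp hdja hv hv'
    · rw [mem_split_liftR] at hv hv'
      exact Set.disjoint_left.mp hdjb hv hv'
  · ext v
    simp only [Set.mem_union, Set.mem_univ, iff_true]
    rcases lift_cases v with ⟨u, rfl⟩ | ⟨u, rfl⟩
    · rw [mem_split_liftL, mem_split_liftL]; exact hmemA u
    · rw [mem_split_liftR, mem_split_liftR]; exact hmemB u
  · -- D dominating
    intro v hv
    rcases lift_cases v with ⟨u, rfl⟩ | ⟨u, rfl⟩
    · rw [mem_split_liftL] at hv
      obtain ⟨w, hw, hadj⟩ := hDa _ hv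
      exact ⟨liftL w, mem_split_liftL.mpr hw, adj_liftL hadj⟩
    · rw [mem_split_liftR] at hv
      obtain ⟨w, hw, hadj⟩ := hDb _ hv
      exact ⟨liftR w, mem_split_liftR.mpr hw, adj_liftR hadj⟩
  · -- P dominating
    intro v hv
    rcases lift_cases v with ⟨u, rfl⟩ | ⟨u, rfl⟩
    · rw [mem_split_liftL] at hv
      obtain ⟨w, hw, hadj⟩ := hPa _ hv
      exact ⟨liftL w, mem_split_liftL.mpr hw, adj_liftL hadj⟩
    · rw [mem_split_liftR] at hv
      obtain ⟨w, hw, hadj⟩ := hPb _ hv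
      exact ⟨liftR w, mem_split_liftR.mpr hw, adj_liftR hadj⟩
  · -- matching
    intro v hv
    rcases lift_cases v with ⟨u, rfl⟩ | ⟨u, rfl⟩
    · rw [mem_split_liftL] at hv
      obtain ⟨h1, h2, h3⟩ := hma _ hv
      rw [matchSplit_liftL]
      refine ⟨mem_split_liftL.mpr h1, adj_liftL h2, ?_⟩
      rw [matchSplit_liftL, h3]
    · rw [mem_split_liftR] at hv
      obtain ⟨h1, h2, h3⟩ := hmb _ hv
      rw [matchSplit_liftR]
      refine ⟨mem_split_liftR.mpr h1, adj_liftR h2, ?_⟩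
      rw [matchSplit_liftR, h3]

set_option maxRecDepth 100000 in
/-- The path `P_n` is a DPDP-graph if and only if `n ∉ {1, 2, 3, 5, 6, 9}`. -/
theorem stmt2 (n : ℕ) (hn : 1 ≤ n) :
    IsDPDP (SimpleGraph.pathGraph n) ↔ n ∉ ({1, 2, 3, 5, 6, 9} : Set ℕ) := by
  constructor
  · intro h hbad
    obtain ⟨D, QD⟩ := dpdp_qpath h
    simp only [Set.mem_insert_iff, Set.mem_singleton_iff] at hbad
    rcases hbad with rfl | rfl | rfl | rfl | rfl | rfl
    · exact (by decide : ¬ ∃ D : Finset (Fin 1), QPath 1 D) ⟨D, QD⟩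
    · exact (by decide : ¬ ∃ D : Finset (Fin 2), QPath 2 D) ⟨D, QD⟩
    · exact (by decide : ¬ ∃ D : Finset (Fin 3), QPath 3 D) ⟨D, QD⟩
    · exact (by decide : ¬ ∃ D : Finset (Fin 5), QPath 5 D) ⟨D, QD⟩
    · exact (by decide : ¬ ∃ D : Finset (Fin 6), QPath 6 D) ⟨D, QD⟩
    · exact (by decide : ¬ ∃ D : Finset (Fin 9), QPath 9 D) ⟨D, QD⟩
  · intro h
    simp only [Set.mem_insert_iff, Set.mem_singleton_iff, not_or] at h
    obtain ⟨h1, h2, h3, h5, h6, h9⟩ := h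
    have hm : n % 3 = 0 ∨ n % 3 = 1 ∨ n % 3 = 2 := by omega
    rcases hm with hm | hm | hm
    · -- n % 3 = 0, n ≥ 12 : n = (3k+4) + 4 + 4
      have hk : (3 * ((n - 12) / 3) + 4) + 4 + 4 = n := by omega
      have := glue_dpdp (glue_dpdp (base_dpdp ((n - 12) / 3)) (base_dpdp 0)) (base_dpdp 0)
      rw [show (3 * 0 + 4) = 4 from rfl] at this
      rw [hk] at this
      exact this
    · -- n % 3 = 1, n ≥ 4 : n = 3k+4
      have hk : 3 * ((n - 4) / 3) + 4 = n := by omega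
      have := base_dpdp ((n - 4) / 3)
      rw [hk] at this
      exact this
    · -- n % 3 = 2, n ≥ 8 : n = (3k+4) + 4
      have hk : (3 * ((n - 8) / 3) + 4) + 4 = n := by omega
      have := glue_dpdp (base_dpdp ((n - 8) / 3)) (base_dpdp 0)
      rw [show (3 * 0 + 4) = 4 from rfl] at this
      rw [hk] at this
      exact this
end

section
/- If H is a simple graph with no isolated vertex and S_2(H) is the graph obtained from H by subdividing every edge twice, then S_2(H) is a DPDP-graph: the set of original vertices is a dominating set and the set of new subdivision vertices is a paired-dominating set. -/
open SimpleGraph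

variable {V : Type*}

/-- The double subdivision of `H`: each edge `uv` of `H` is replaced by a path
`u, u_e, v_e, v` with two new internal vertices. The new vertex adjacent to `u`
on the edge `uv` is encoded as `Sum.inr ⟨(u, v), _⟩`. -/
def S2 (H : SimpleGraph V) : SimpleGraph (V ⊕ {e : V × V // H.Adj e.1 e.2}) where
  Adj x y :=
    match x, y with
    | Sum.inl u, Sum.inr e => u = e.1.1
    | Sum.inr e, Sum.inl u => u = e.1.1
    | Sum.inr e, Sum.inr f => e.1.1 = f.1.2 ∧ e.1.2 = f.1.1
    | _, _ => False
  symm := by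
    constructor
    rintro (u | e) (w | f) h <;> simp_all
  loopless := by
    constructor
    rintro (u | e) h
    · exact h
    · exact H.irrefl (h.1 ▸ e.2)

/-- If `H` has no isolated vertex, then its double subdivision `S₂(H)` is a
DPDP-graph: the original vertices form a dominating set and the new subdivision
vertices form a paired-dominating set. -/
theorem stmt7 {V : Type*} (H : SimpleGraph V) (h : ∀ v : V, ∃ u, H.Adj v u) :
    Dominating (S2 H) (Set.range Sum.inl) ∧
      PairedDominating (S2 H) (Set.range Sum.inr) ∧
      IsDPDP (S2 H) := by

  have hdom : Dominating (S2 H) (Set.range Sum.inl) := by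
    rintro (u | e) hv
    · exact absurd ⟨u, rfl⟩ hv
    · exact ⟨Sum.inl e.1.1, ⟨e.1.1, rfl⟩, rfl⟩
  have hpdom : PairedDominating (S2 H) (Set.range Sum.inr) := by
    constructor
    · rintro (u | e) hv
      · obtain ⟨w, hw⟩ := h u
        exact ⟨Sum.inr ⟨(u, w), hw⟩, ⟨_, rfl⟩, rfl⟩
      · exact absurd ⟨e, rfl⟩ hv
    · refine ⟨fun x => match x with
        | Sum.inl u => Sum.inl u
        | Sum.inr ⟨(a, b), hab⟩ => Sum.inr ⟨(b, a), hab.symm⟩, ?_⟩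
      rintro (u | ⟨⟨a, b⟩, hab⟩) hv
      · exact absurd hv (by simp)
      · exact ⟨⟨_, rfl⟩, ⟨rfl, rfl⟩, rfl⟩
  refine ⟨hdom, hpdom, Set.range Sum.inl, Set.range Sum.inr, ?_, ?_, hdom, hpdom⟩
  · rw [Set.disjoint_iff_forall_ne]
    rintro _ ⟨a, rfl⟩ _ ⟨b, rfl⟩
    simp
  · ext (u | e) <;> simp
end

section
/- If G is a minimal DPDP-graph and (D, P) is a partition of V(G) into a dominating set D and a paired-dominating set P, then D is a maximal independent set in G. -/
open SimpleGraph

variable {V : Type*}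

/-- In a minimal DPDP-graph, the dominating set of any DP-pair is a maximal
independent set. -/
theorem stmt8 {V : Type*} (G : SimpleGraph V) (D P : Set V)
    (hmin : IsMinimalDPDP G) (hDP : IsDPPair G D P) :
    (∀ u ∈ D, ∀ v ∈ D, ¬ G.Adj u v) ∧
      (∀ D' : Set V, D ⊆ D' → (∀ u ∈ D', ∀ v ∈ D', ¬ G.Adj u v) → D' = D) := by

  obtain ⟨hdisj, huniv, hDdom, hPdom, m, hm⟩ := hDP
  constructor
  · intro u hu v hv hadj
    set G' := G.deleteEdges {s(u, v)} with hG'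
    have hkey : ∀ a b, G.Adj a b → (a ∉ D ∨ b ∉ D) → G'.Adj a b := by
      intro a b hab hnot
      rw [hG', SimpleGraph.deleteEdges_adj]
      refine ⟨hab, ?_⟩
      simp only [Set.mem_singleton_iff, Sym2.eq_iff]
      rintro (⟨rfl, rfl⟩ | ⟨rfl, rfl⟩) <;> tauto
    refine hmin.2 G' ?_ ⟨D, P, hdisj, huniv, ?_, ?_, m, ?_⟩
    · refine lt_of_le_of_ne (SimpleGraph.deleteEdges_le _) fun h => ?_
      have : G'.Adj u v := h ▸ hadj
      rw [hG', SimpleGraph.deleteEdges_adj] at this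
      simp at this
    · intro x hx
      obtain ⟨w, hw, hadjw⟩ := hDdom x hx
      exact ⟨w, hw, hkey x w hadjw (Or.inl hx)⟩
    · intro x hx
      obtain ⟨w, hw, hadjw⟩ := hPdom x hx
      exact ⟨w, hw, hkey x w hadjw (Or.inr (fun h => Set.disjoint_left.mp hdisj h hw))⟩
    · intro x hx
      obtain ⟨h1, h2, h3⟩ := hm x hx
      exact ⟨h1, hkey x (m x) h2 (Or.inl (fun h => Set.disjoint_left.mp hdisj h hx)), h3⟩
  · intro D' hsub hind
    refine Set.Subset.antisymm ?_ hsub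
    intro x hx
    by_contra hxD
    obtain ⟨w, hw, hadjw⟩ := hDdom x hxD
    exact hind x hx w (hsub hw) hadjw
end

section
/- If G is a minimal DPDP-graph and (D, P) is a partition of V(G) into a dominating set D and a paired-dominating set P, then the induced subgraph G[P] is a disjoint union of edges, i.e., every vertex of G[P] has degree exactly 1 in G[P]. -/
open SimpleGraph

variable {V : Type*}

/-- In a minimal DPDP-graph, the subgraph induced by the paired-dominating set of
any DP-pair is a disjoint union of edges: every vertex of `G[P]` has exactly one
neighbor inside `P`. -/
theorem stmt9 {V : Type*} (G : SimpleGraph V) (D P : Set V)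
    (hmin : IsMinimalDPDP G) (hDP : IsDPPair G D P) :
    ∀ v ∈ P, ({u | u ∈ P ∧ G.Adj v u} : Set V).ncard = 1 := by
  obtain ⟨hdisj, huniv, hDdom, hPd, m, hm⟩ := hDP
  intro v hv
  have hkey : ({u | u ∈ P ∧ G.Adj v u} : Set V) = {m v} := by
    ext u
    simp only [Set.mem_setOf_eq, Set.mem_singleton_iff]
    constructor
    · rintro ⟨huP, hadj⟩
      by_contra hne
      set G' : SimpleGraph V := G.deleteEdges {s(v, u)} with hG'
      have hlt : G' < G := by
        refine lt_of_le_of_ne (SimpleGraph.deleteEdges_le _) ?_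
        intro heq
        have : G'.Adj v u := heq ▸ hadj
        rw [hG', SimpleGraph.deleteEdges_adj] at this
        exact this.2 (Set.mem_singleton _)
      refine hmin.2 G' hlt ⟨D, P, hdisj, huniv, ?_, ?_, m, ?_⟩
      · intro w hw
        obtain ⟨x, hxD, hwx⟩ := hDdom w hw
        refine ⟨x, hxD, ?_⟩
        rw [hG', SimpleGraph.deleteEdges_adj]
        refine ⟨hwx, ?_⟩
        simp only [Set.mem_singleton_iff, Sym2.eq_iff]
        rintro (⟨rfl, rfl⟩ | ⟨rfl, rfl⟩)
        · exact absurd hxD (Set.disjoint_right.mp hdisj huP)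
        · exact absurd hxD (Set.disjoint_right.mp hdisj hv)
      · intro w hw
        obtain ⟨x, hxP, hwx⟩ := hPd w hw
        refine ⟨x, hxP, ?_⟩
        rw [hG', SimpleGraph.deleteEdges_adj]
        refine ⟨hwx, ?_⟩
        simp only [Set.mem_singleton_iff, Sym2.eq_iff]
        rintro (⟨rfl, rfl⟩ | ⟨rfl, rfl⟩)
        · exact hw hv
        · exact hw huP
      · intro w hw
        obtain ⟨h1, h2, h3⟩ := hm w hw
        refine ⟨h1, ?_, h3⟩
        rw [hG', SimpleGraph.deleteEdges_adj]
        refine ⟨h2, ?_⟩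
        simp only [Set.mem_singleton_iff, Sym2.eq_iff]
        rintro (⟨rfl, h⟩ | ⟨rfl, h⟩)
        · exact hne h.symm
        · apply hne
          rw [← h3, h]
    · rintro rfl
      exact ⟨(hm v hv).1, (hm v hv).2.1⟩
  rw [hkey]
  exact Set.ncard_singleton _
end

section
/- If G is a minimal DPDP-graph with DP-pair (D, P), then for every vertex x ∈ P, either x has exactly one neighbor outside P, or every neighbor of x outside P is a leaf of G (and x has at least one such neighbor). -/
open SimpleGraph

variable {V : Type*}

private lemma del_lt {V : Type*} (G : SimpleGraph V) {a b : V} (h : G.Adj a b) :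
    G.deleteEdges {s(a,b)} < G := by
  refine lt_of_le_of_ne (SimpleGraph.deleteEdges_le _) ?_
  intro he
  have h2 : (G.deleteEdges {s(a,b)}).Adj a b := by rw [he]; exact h
  rw [SimpleGraph.deleteEdges_adj] at h2
  exact h2.2 rfl

private lemma adj_del {V : Type*} {G : SimpleGraph V} {a b c d : V} (h : G.Adj c d)
    (h1 : ¬(c = a ∧ d = b)) (h2 : ¬(c = b ∧ d = a)) :
    (G.deleteEdges {s(a,b)}).Adj c d := by
  rw [SimpleGraph.deleteEdges_adj]
  refine ⟨h, ?_⟩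
  simp only [Set.mem_singleton_iff, Sym2.eq_iff]
  tauto

/-- In a minimal DPDP-graph with DP-pair `(D, P)`, every vertex `x ∈ P` either has
exactly one neighbor outside `P`, or all its neighbors outside `P` are leaves and
it has at least one such neighbor. -/
theorem stmt10 {V : Type*} [Fintype V] (G : SimpleGraph V) (D P : Set V)
    (hmin : IsMinimalDPDP G) (hDP : IsDPPair G D P) :
    ∀ x ∈ P, ({u | u ∉ P ∧ G.Adj x u} : Set V).ncard = 1 ∨
      ((∀ u, u ∉ P → G.Adj x u → IsLeaf G u) ∧ ∃ u, u ∉ P ∧ G.Adj x u) := by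
  obtain ⟨hdisj, huniv, hDdom, hPdomP, m, hm⟩ := hDP
  have hmemD : ∀ v, v ∉ P → v ∈ D := by
    intro v hv
    have hv2 : v ∈ D ∪ P := huniv ▸ Set.mem_univ v
    rcases hv2 with h | h
    · exact h
    · exact absurd h hv
  have hmemP : ∀ v, v ∉ D → v ∈ P := by
    intro v hv
    have hv2 : v ∈ D ∪ P := huniv ▸ Set.mem_univ v
    rcases hv2 with h | h
    · exact absurd h hv
    · exact h
  have hDnP : ∀ v ∈ D, v ∉ P := fun v hv => Set.disjoint_left.mp hdisj hv
  intro x hx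
  have hxD : x ∉ D := fun h => hDnP x h hx
  obtain ⟨u0, hu0D, hxu0⟩ := hDdom x hxD
  have hu0P : u0 ∉ P := hDnP u0 hu0D
  by_cases h1 : ({u | u ∉ P ∧ G.Adj x u} : Set V).ncard = 1
  · left; exact h1
  right
  refine ⟨?_, u0, hu0P, hxu0⟩
  intro u huP hxu
  by_contra hleaf
  have hxnu : x ≠ u := fun h => huP (h ▸ hx)
  have hne : ∃ w, G.Adj u w ∧ w ≠ x := by
    by_contra h
    push_neg at h
    apply hleaf
    have hset : G.neighborSet u = {x} := by
      ext w
      simp only [SimpleGraph.mem_neighborSet, Set.mem_singleton_iff]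
      exact ⟨fun hw => h w hw, fun hw => hw ▸ hxu.symm⟩
    rw [IsLeaf, hset, Set.ncard_singleton]
  obtain ⟨w, huw, hwx⟩ := hne
  by_cases hP2 : ∃ p ∈ P, p ≠ x ∧ G.Adj u p
  · -- Case A: delete edge x-u
    have hS2 : ∃ u2, (u2 ∉ P ∧ G.Adj x u2) ∧ u2 ≠ u := by
      by_contra h
      push_neg at h
      apply h1
      have hS : ({u' | u' ∉ P ∧ G.Adj x u'} : Set V) = {u} := by
        ext v
        simp only [Set.mem_setOf_eq, Set.mem_singleton_iff]
        exact ⟨fun hv => h v hv, fun hv => hv ▸ ⟨huP, hxu⟩⟩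
      rw [hS, Set.ncard_singleton]
    obtain ⟨u2, ⟨hu2P, hxu2⟩, hu2u⟩ := hS2
    obtain ⟨p, hpP, hpx, hup⟩ := hP2
    refine hmin.2 (G.deleteEdges {s(x,u)}) (del_lt G hxu) ⟨D, P, hdisj, huniv, ?_, ?_, m, ?_⟩
    · intro v hvD
      have hvP : v ∈ P := hmemP v hvD
      by_cases hvx : v = x
      · subst hvx
        exact ⟨u2, hmemD u2 hu2P, adj_del hxu2 (fun h => hu2u h.2) (fun h => hxnu h.1)⟩
      · obtain ⟨d, hdD, hvd⟩ := hDdom v hvD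
        exact ⟨d, hdD, adj_del hvd (fun h => hvx h.1) (fun h => huP (h.1 ▸ hvP))⟩
    · intro v hvP
      by_cases hvu : v = u
      · subst hvu
        exact ⟨p, hpP, adj_del hup (fun h => hxnu h.1.symm) (fun h => hpx h.2)⟩
      · obtain ⟨q, hqP, hvq⟩ := hPdomP v hvP
        exact ⟨q, hqP, adj_del hvq (fun h => hvP (h.1 ▸ hx)) (fun h => hvu h.1)⟩
    · intro v hvP
      obtain ⟨h1', h2', h3'⟩ := hm v hvP
      exact ⟨h1', adj_del h2' (fun h => huP (h.2 ▸ h1')) (fun h => huP (h.1 ▸ hvP)), h3'⟩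
  · -- Case B: delete edge u-w
    push_neg at hP2
    have hwP : w ∉ P := fun h => (hP2 w h hwx) huw
    refine hmin.2 (G.deleteEdges {s(u,w)}) (del_lt G huw) ⟨D, P, hdisj, huniv, ?_, ?_, m, ?_⟩
    · intro v hvD
      have hvP : v ∈ P := hmemP v hvD
      obtain ⟨d, hdD, hvd⟩ := hDdom v hvD
      exact ⟨d, hdD, adj_del hvd (fun h => huP (h.1 ▸ hvP)) (fun h => hwP (h.1 ▸ hvP))⟩
    · intro v hvP
      obtain ⟨q, hqP, hvq⟩ := hPdomP v hvP
      exact ⟨q, hqP, adj_del hvq (fun h => hwP (h.2 ▸ hqP)) (fun h => huP (h.2 ▸ hqP))⟩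
    · intro v hvP
      obtain ⟨h1', h2', h3'⟩ := hm v hvP
      exact ⟨h1', adj_del h2' (fun h => huP (h.1 ▸ hvP)) (fun h => hwP (h.1 ▸ hvP)), h3'⟩
end

section
/- The path P_n is a minimal DPDP-graph if and only if n ∈ {4, 7, 10, 13}. -/
open SimpleGraph

variable {V : Type*}

/-!
Let `(D, P)` be a DP-pair of a spanning subgraph `G` of `P_n`. In a path, a vertex
of `P` has only its partner and one vertex of `D` as neighbours, so `P` consists of `l` blocks
`v, v + 1` and each is followed by a vertex `v + 2 ∈ D`. Hence distinct vertices of `D` have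
distinct `P`-neighbours, giving `|D| ≤ |P| = 2l`, while the vertices `v + 2` and the leftmost
vertices of the components of `G` are distinct vertices of `D`, giving `|D| ≥ l + c(G)`. So
`3l + c(G) ≤ n ≤ 4l`: this excludes `n ∈ {1, 2, 3, 5, 6, 9}` and, for `n ∈ {4, 7, 10, 13}`,
every disconnected, i.e. proper, spanning subgraph. Conversely the labelling `D P P D P P … D`
makes `P_n` a DPDP-graph when `n ≡ 1 (mod 3)`, and every other DPDP path splits into a path of
length `s ∈ {4, 7, 10, 13}` followed by copies of `P_4`.
-/

theorem ncard_eq_two_mul_ncard_setOf_lt {α : Type*} [LinearOrder α] {P : Set α} {m : α → α}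
    (hP : P.Finite) (hm : ∀ v ∈ P, m v ∈ P ∧ m v ≠ v ∧ m (m v) = v) :
    P.ncard = 2 * {v ∈ P | v < m v}.ncard := by
  set L := {v ∈ P | v < m v}
  have hinj : Set.InjOn m L := fun a ha b hb hab => by
    rw [← (hm a ha.1).2.2, hab, (hm b hb.1).2.2]
  have hdisj : Disjoint L (m '' L) := by
    rw [Set.disjoint_left]
    rintro _ ⟨-, hlt⟩ ⟨w, ⟨hw, hwlt⟩, rfl⟩
    rw [(hm w hw).2.2] at hlt
    exact lt_asymm hwlt hlt
  have hunion : L ∪ m '' L = P := by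
    refine Set.Subset.antisymm (Set.union_subset (fun v hv => hv.1) ?_) fun v hv => ?_
    · rintro _ ⟨w, hw, rfl⟩
      exact (hm w hw.1).1
    obtain ⟨hmv, hne, hmm⟩ := hm v hv
    rcases hne.lt_or_gt with hlt | hlt
    · exact Or.inr ⟨m v, ⟨hmv, hmm.symm ▸ hlt⟩, hmm⟩
    · exact Or.inl ⟨hv, hlt⟩
  have hLfin : L.Finite := hP.subset fun v hv => hv.1
  rw [← hunion, Set.ncard_union_eq hdisj hLfin (hLfin.image m), hinj.ncard_image]
  ring

section PathSubgraph

variable {n : ℕ} {G : SimpleGraph (Fin n)} {D P : Set (Fin n)}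

-- For `G ≤ pathGraph n`, these are the leftmost vertices of the components of `G`.
def leftEnds (G : SimpleGraph (Fin n)) : Set (Fin n) := {v | ∀ u, G.Adj v u → v < u}

lemma val_eq_or_of_adj (hG : G ≤ pathGraph n) {u v : Fin n} (h : G.Adj u v) :
    v.val = u.val + 1 ∨ u.val = v.val + 1 := by
  have := hG h
  rw [pathGraph_adj] at this
  omega

lemma IsDPPair.ncard_le_ncard (hG : G ≤ pathGraph n) (h : IsDPPair G D P) :
    D.ncard ≤ P.ncard := by
  obtain ⟨hdisj, -, -, hPdom, m, hm⟩ := h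
  choose! f hfP hfadj using fun v hv => hPdom v (hdisj.notMem_of_mem_left hv)
  refine Set.ncard_le_ncard_of_injOn f hfP fun a ha b hb hab => ?_
  obtain ⟨hmP, hmadj, -⟩ := hm _ (hfP a ha)
  -- `f a` has the three neighbours `a`, `b` and its partner, but a path vertex has only two.
  have hma : m (f a) ≠ a := fun h => hdisj.notMem_of_mem_left ha (h ▸ hmP)
  have hmb : m (f a) ≠ b := fun h => hdisj.notMem_of_mem_left hb (h ▸ hmP)
  have h1 := val_eq_or_of_adj hG (hfadj a ha)
  have h2 := val_eq_or_of_adj hG (hfadj b hb)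
  have h3 := val_eq_or_of_adj hG hmadj
  rw [hab] at h1
  rw [Ne, Fin.ext_iff] at hma hmb
  exact Fin.ext (by omega)

section Pairing

variable {m : Fin n → Fin n} (hG : G ≤ pathGraph n) (h : IsDPPair G D P)
  (hm : ∀ v ∈ P, m v ∈ P ∧ G.Adj v (m v) ∧ m (m v) = v)
include hG h hm

lemma leftEnds_subset_of_isDPPair : leftEnds G ⊆ D := by
  obtain ⟨hdisj, hunion, hD, -⟩ := h
  intro v hv
  by_contra hvD
  have hvP : v ∈ P := (hunion.symm ▸ Set.mem_univ v : v ∈ D ∪ P).resolve_left hvD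
  obtain ⟨w, hwD, hvw⟩ := hD v hvD
  obtain ⟨hmP, hvm, -⟩ := hm v hvP
  have h1 := val_eq_or_of_adj hG hvw
  have h2 := val_eq_or_of_adj hG hvm
  have h3 := hv w hvw
  have h4 := hv (m v) hvm
  rw [Fin.lt_def] at h3 h4
  have hwm : w = m v := Fin.ext (by omega)
  exact hdisj.notMem_of_mem_left hwD (hwm ▸ hmP)

lemma ncard_setOf_lt_add_ncard_leftEnds_le :
    {v ∈ P | v < m v}.ncard + (leftEnds G).ncard ≤ D.ncard := by
  have hends := leftEnds_subset_of_isDPPair hG h hm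
  obtain ⟨hdisj, -, hD, -⟩ := h
  choose! dn hdnD hdnadj using hD
  -- the block `v, m v` of `P` is followed by the vertex `dn (m v) ∈ D` at `v + 2`
  have hg : ∀ v ∈ {v ∈ P | v < m v}, dn (m v) ∈ D ∧ G.Adj (dn (m v)) (m v) ∧ m v < dn (m v) ∧
      (dn (m v)).val = v.val + 2 := by
    rintro v ⟨hvP, hlt⟩
    obtain ⟨hmP, hvm, -⟩ := hm v hvP
    have hmD := hdisj.notMem_of_mem_right hmP
    have hgv : dn (m v) ≠ v := fun h => hdisj.notMem_of_mem_left (h ▸ hdnD _ hmD) hvP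
    have h1 := val_eq_or_of_adj hG hvm
    have h2 := val_eq_or_of_adj hG (hdnadj _ hmD)
    rw [Fin.lt_def] at hlt ⊢
    rw [Ne, Fin.ext_iff] at hgv
    exact ⟨hdnD _ hmD, (hdnadj _ hmD).symm, by omega, by omega⟩
  have hinj : Set.InjOn (dn ∘ m) {v ∈ P | v < m v} := fun a ha b hb hab => by
    have ha' := (hg a ha).2.2.2
    have hb' := (hg b hb).2.2.2
    rw [Function.comp_apply, Function.comp_apply] at hab
    exact Fin.ext (by rw [hab] at ha'; omega)
  have hdisj' : Disjoint ((dn ∘ m) '' {v ∈ P | v < m v}) (leftEnds G) := by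
    rw [Set.disjoint_left]
    rintro _ ⟨v, hv, rfl⟩ hend
    exact (hend _ (hg v hv).2.1).not_gt (hg v hv).2.2.1
  rw [← hinj.ncard_image, ← Set.ncard_union_eq hdisj']
  exact Set.ncard_le_ncard
    (Set.union_subset (Set.image_subset_iff.2 fun v hv => (hg v hv).1) hends)

end Pairing

theorem IsDPDP.exists_bounds_of_le_pathGraph (h : IsDPDP G) (hG : G ≤ pathGraph n) :
    ∃ l, 3 * l + (leftEnds G).ncard ≤ n ∧ n ≤ 4 * l := by
  obtain ⟨D, P, hDP⟩ := h
  obtain ⟨m, hm⟩ := hDP.2.2.2.2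
  have hcard : D.ncard + P.ncard = n := by
    rw [← Set.ncard_union_eq hDP.1, hDP.2.1, Set.ncard_univ, Nat.card_fin]
  have hP := ncard_eq_two_mul_ncard_setOf_lt P.toFinite fun v hv =>
    ⟨(hm v hv).1, G.ne_of_adj (hm v hv).2.1 |>.symm, (hm v hv).2.2⟩
  have hDP' := hDP.ncard_le_ncard hG
  have hD := ncard_setOf_lt_add_ncard_leftEnds_le hG hDP hm
  exact ⟨{v ∈ P | v < m v}.ncard, by omega, by omega⟩

lemma mem_leftEnds_of_not_adj (hG : G ≤ pathGraph n) {u v : Fin n} (huv : u.val + 1 = v.val)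
    (h : ¬ G.Adj u v) : v ∈ leftEnds G := by
  intro w hvw
  rcases val_eq_or_of_adj hG hvw with hw | hw
  · exact Fin.lt_def.2 (by omega)
  · obtain rfl : w = u := Fin.ext (by omega)
    exact absurd hvw.symm h

lemma zero_mem_leftEnds (hn : 0 < n) (hG : G ≤ pathGraph n) : ⟨0, hn⟩ ∈ leftEnds G :=
  fun w hw => Fin.lt_def.2 (by have := val_eq_or_of_adj hG hw; simp only at this ⊢; omega)

lemma one_le_ncard_leftEnds (hn : 0 < n) (hG : G ≤ pathGraph n) : 1 ≤ (leftEnds G).ncard :=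
  (Set.ncard_pos (Set.toFinite _)).2 ⟨_, zero_mem_leftEnds hn hG⟩

lemma two_le_ncard_leftEnds (hG : G < pathGraph n) : 2 ≤ (leftEnds G).ncard := by
  obtain ⟨u, v, huv, hnot⟩ : ∃ u v, (pathGraph n).Adj u v ∧ ¬ G.Adj u v := by
    by_contra! h
    exact hG.not_ge fun u v => h u v
  obtain ⟨w, hw, hwend⟩ : ∃ w : Fin n, 0 < w.val ∧ w ∈ leftEnds G := by
    rcases pathGraph_adj.1 huv with h | h
    · exact ⟨v, by omega, mem_leftEnds_of_not_adj hG.le h hnot⟩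
    · exact ⟨u, by omega, mem_leftEnds_of_not_adj hG.le h fun h' => hnot h'.symm⟩
  have hn : 0 < n := by omega
  have hne : (⟨0, hn⟩ : Fin n) ≠ w := fun h => by rw [← h] at hw; exact hw.false
  rw [← Set.ncard_pair hne]
  exact Set.ncard_le_ncard (Set.insert_subset (zero_mem_leftEnds hn hG.le)
    (Set.singleton_subset_iff.2 hwend))

end PathSubgraph

section CutPath

def cutPath (n : ℕ) (c : ℕ → Prop) : SimpleGraph (Fin n) where
  Adj u v := (u.val + 1 = v.val ∧ ¬ c v) ∨ (v.val + 1 = u.val ∧ ¬ c u)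
  symm := ⟨fun _ _ h => h.symm⟩
  loopless := ⟨fun _ h => by rcases h with ⟨h, -⟩ | ⟨h, -⟩ <;> omega⟩

variable {n : ℕ} {c : ℕ → Prop}

lemma cutPath_adj {u v : Fin n} :
    (cutPath n c).Adj u v ↔ (u.val + 1 = v.val ∧ ¬ c v) ∨ (v.val + 1 = u.val ∧ ¬ c u) :=
  Iff.rfl

lemma cutPath_le_pathGraph : cutPath n c ≤ pathGraph n := fun u v h => by
  rw [pathGraph_adj]
  rcases cutPath_adj.1 h with ⟨h, -⟩ | ⟨h, -⟩ <;> omega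

lemma cutPath_lt_pathGraph {b : ℕ} (hb : 0 < b) (hbn : b < n) (hc : c b) :
    cutPath n c < pathGraph n := by
  refine cutPath_le_pathGraph.lt_of_ne fun h => ?_
  have hadj : (pathGraph n).Adj ⟨b - 1, by omega⟩ ⟨b, hbn⟩ :=
    pathGraph_adj.2 (.inl (by dsimp only; omega))
  rw [← h, cutPath_adj] at hadj
  rcases hadj with ⟨-, h⟩ | ⟨h, -⟩
  · exact h hc
  · dsimp only at h; omega

lemma cutPath_eq_pathGraph (hc : ∀ b < n, ¬ c b) : cutPath n c = pathGraph n := by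
  ext u v
  rw [pathGraph_adj, cutPath_adj]
  constructor
  · rintro (⟨h, -⟩ | ⟨h, -⟩)
    exacts [.inl h, .inr h]
  · rintro (h | h)
    exacts [.inl ⟨h, hc v v.isLt⟩, .inr ⟨h, hc u u.isLt⟩]

def ExistsCutNeighbor (n : ℕ) (c q : ℕ → Prop) (v : ℕ) : Prop :=
  (v + 1 < n ∧ ¬ c (v + 1) ∧ q (v + 1)) ∨ (0 < v ∧ ¬ c v ∧ q (v - 1))

lemma ExistsCutNeighbor.exists_adj {q : ℕ → Prop} {v : Fin n}
    (h : ExistsCutNeighbor n c q v) : ∃ w : Fin n, q w ∧ (cutPath n c).Adj v w := by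
  rcases h with ⟨hlt, hc, hq⟩ | ⟨hpos, hc, hq⟩
  · exact ⟨⟨v + 1, hlt⟩, hq, cutPath_adj.2 (.inl ⟨rfl, hc⟩)⟩
  · exact ⟨⟨v - 1, by omega⟩, hq, cutPath_adj.2 (.inr ⟨by dsimp only; omega, hc⟩)⟩

-- `d v` encodes `v ∈ D`, and `R v` that the partner of `v ∈ P` is `v + 1`.
theorem isDPDP_cutPath (d R : ℕ → Prop)
    (hD : ∀ v < n, ¬ d v → ExistsCutNeighbor n c d v)
    (hP : ∀ v < n, d v → ExistsCutNeighbor n c (¬ d ·) v)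
    (hR : ∀ v < n, ¬ d v → (R v ∧ v + 1 < n ∧ ¬ c (v + 1) ∧ ¬ d (v + 1) ∧ ¬ R (v + 1)) ∨
      (¬ R v ∧ 0 < v ∧ ¬ c v ∧ ¬ d (v - 1) ∧ R (v - 1))) :
    IsDPDP (cutPath n c) := by
  classical
  let m (v : Fin n) : Fin n := if h : R v ∧ v.val + 1 < n then ⟨v + 1, h.2⟩ else ⟨v - 1, by omega⟩
  refine ⟨{v | d v}, {v | ¬ d v}, Set.disjoint_left.2 fun _ h h' => h' h,
    Set.union_compl_self _, fun v hv => (hD v v.isLt hv).exists_adj,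
    ⟨fun v hv => (hP v v.isLt (not_not.1 hv)).exists_adj, m, fun v hv => ?_⟩⟩
  rcases hR v v.isLt hv with ⟨hRv, hlt, hc, hd, hR'⟩ | ⟨hRv, hpos, hc, hd, hR'⟩
  · have hmv : m v = ⟨v + 1, hlt⟩ := dif_pos ⟨hRv, hlt⟩
    have hmm : m ⟨v + 1, hlt⟩ = v := (dif_neg fun h => hR' h.1).trans (Fin.ext (by simp))
    rw [hmv, hmm]
    exact ⟨hd, cutPath_adj.2 (.inl ⟨rfl, hc⟩), rfl⟩
  · have hmv : m v = ⟨v - 1, by omega⟩ := dif_neg fun h => hRv h.1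
    have hmm : m ⟨v - 1, by omega⟩ = v :=
      (dif_pos ⟨hR', by dsimp only; omega⟩).trans (Fin.ext (by dsimp only; omega))
    rw [hmv, hmm]
    exact ⟨hd, cutPath_adj.2 (.inr ⟨by dsimp only; omega, hc⟩), rfl⟩

def blockCut (s b : ℕ) : Prop := s ≤ b ∧ (b - s) % 4 = 0

theorem isDPDP_cutPath_blockCut {s : ℕ} (hs4 : 4 ≤ s) (hs : s % 3 = 1) (hsn : s ≤ n)
    (hn : (n - s) % 4 = 0) : IsDPDP (cutPath n (blockCut s)) := by
  -- label `[0, s)` by `D P P D P P … P P D` and each later block of four by `D P P D`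
  refine isDPDP_cutPath
    (fun v => (v < s ∧ v % 3 = 0) ∨ (s ≤ v ∧ ((v - s) % 4 = 0 ∨ (v - s) % 4 = 3)))
    (fun v => (v < s ∧ v % 3 = 1) ∨ (s ≤ v ∧ (v - s) % 4 = 1)) ?_ ?_ ?_ <;>
  · intro v hv
    simp only [ExistsCutNeighbor, blockCut]
    omega

theorem isDPDP_pathGraph (h4 : 4 ≤ n) (h3 : n % 3 = 1) : IsDPDP (pathGraph n) := by
  rw [← cutPath_eq_pathGraph (c := blockCut n) fun b hb h => by unfold blockCut at h; omega]
  exact isDPDP_cutPath_blockCut h4 h3 le_rfl (by simp)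

end CutPath

/-- The path `P_n` is a minimal DPDP-graph if and only if `n ∈ {4, 7, 10, 13}`. -/
theorem stmt11 (n : ℕ) (hn : 1 ≤ n) :
    IsMinimalDPDP (SimpleGraph.pathGraph n) ↔ n ∈ ({4, 7, 10, 13} : Set ℕ) := by
  simp only [Set.mem_insert_iff, Set.mem_singleton_iff]
  constructor
  · rintro ⟨hdp, hmin⟩
    obtain ⟨l, hl⟩ := hdp.exists_bounds_of_le_pathGraph le_rfl
    have hc := one_le_ncard_leftEnds hn (le_refl (pathGraph n))
    by_contra hn'
    -- the start `s ∈ {4, 7, 10, 13}` with `s ≡ n [MOD 4]`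
    let s := 4 + 3 * ((4 - n % 4) % 4)
    exact hmin _ (cutPath_lt_pathGraph (b := s) (by omega) (by omega) ⟨le_rfl, by simp⟩)
      (isDPDP_cutPath_blockCut (by omega) (by omega) (by omega) (by omega))
  · intro hn'
    refine ⟨isDPDP_pathGraph (by omega) (by omega), fun G hG hdp => ?_⟩
    obtain ⟨l, hl⟩ := hdp.exists_bounds_of_le_pathGraph hG.le
    have hc := two_le_ncard_leftEnds hG
    omega
end

section
/- The complete graph K_n is a minimal DPDP-graph if and only if n = 3. -/
open SimpleGraph

variable {V : Type*}

-- auxiliary: a graph with a pair b,c adjacent, b dominating everything else,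
-- and a vertex a outside {b,c} adjacent to both, is DPDP.
lemma dpdp_of {n : ℕ} (G : SimpleGraph (Fin n)) (a b c : Fin n)
    (hbc : G.Adj b c) (hab : a ≠ b) (hac : a ≠ c)
    (hba : G.Adj b a) (hca : G.Adj c a)
    (hdomP : ∀ v, v ≠ b → v ≠ c → G.Adj v b) : IsDPDP G := by
  refine ⟨({b, c} : Set (Fin n))ᶜ, {b, c}, disjoint_compl_left, Set.compl_union_self _, ?_, ?_, ?_⟩
  · intro v hv
    simp only [Set.mem_compl_iff, not_not] at hv
    refine ⟨a, by simp [hab, hac], ?_⟩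
    rcases hv with h | h
    · exact h ▸ hba
    · exact h ▸ hca
  · intro v hv
    simp only [Set.mem_insert_iff, Set.mem_singleton_iff, not_or] at hv
    exact ⟨b, by simp, hdomP v hv.1 hv.2⟩
  · have hbc' : b ≠ c := hbc.ne
    refine ⟨fun v => if v = b then c else if v = c then b else v, ?_⟩
    intro v hv
    rcases hv with h | h
    · subst h
      simp [hbc', hbc]
    · simp only [Set.mem_singleton_iff] at h
      subst h
      simp [hbc'.symm, hbc.symm, hbc']

lemma three_le {n : ℕ} (hn : 1 ≤ n) {G : SimpleGraph (Fin n)} (h : IsDPDP G) :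
    3 ≤ n := by
  obtain ⟨D, P, hdisj, huniv, hDdom, hPdom, m, hm⟩ := h
  have v0 : Fin n := ⟨0, hn⟩
  have hPne : P.Nonempty := by
    by_contra hP
    rw [Set.not_nonempty_iff_eq_empty] at hP
    obtain ⟨u, hu, -⟩ := hPdom v0 (by simp [hP])
    simp [hP] at hu
  obtain ⟨p, hp⟩ := hPne
  obtain ⟨hq, hadj, -⟩ := hm p hp
  have hpq : p ≠ m p := hadj.ne
  have hDne : D.Nonempty := by
    by_contra hD
    rw [Set.not_nonempty_iff_eq_empty] at hD
    obtain ⟨u, hu, -⟩ := hDdom p (by simp [hD])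
    simp [hD] at hu
  obtain ⟨d, hd⟩ := hDne
  have hdp : d ≠ p := fun e => Set.disjoint_left.mp hdisj hd (e ▸ hp)
  have hdq : d ≠ m p := fun e => Set.disjoint_left.mp hdisj hd (e ▸ hq)
  have hcard : ({d, p, m p} : Finset (Fin n)).card = 3 := by
    rw [Finset.card_insert_of_notMem (by simp [hdp, hdq]),
      Finset.card_insert_of_notMem (by simp [hpq]), Finset.card_singleton]
  calc 3 = ({d, p, m p} : Finset (Fin n)).card := hcard.symm
    _ ≤ Fintype.card (Fin n) := Finset.card_le_univ _
    _ = n := Fintype.card_fin n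


/-- The complete graph `K_n` is a minimal DPDP-graph if and only if `n = 3`. -/
theorem stmt13 (n : ℕ) (hn : 1 ≤ n) :
    IsMinimalDPDP (⊤ : SimpleGraph (Fin n)) ↔ n = 3 := by
  constructor
  · rintro ⟨hdp, hmin⟩
    have h3 : 3 ≤ n := three_le hn hdp
    by_contra hne
    have h4 : 4 ≤ n := by omega
    -- the proper spanning subgraph keeping only edges touching vertices 1 or 2
    set b : Fin n := ⟨1, by omega⟩ with hb
    set c : Fin n := ⟨2, by omega⟩ with hc
    set G' : SimpleGraph (Fin n) :=
      SimpleGraph.fromRel (fun v w => v = b ∨ v = c) with hG'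
    have hadj : ∀ v w : Fin n, G'.Adj v w ↔
        v ≠ w ∧ (v = b ∨ v = c ∨ w = b ∨ w = c) := by
      intro v w
      rw [hG', SimpleGraph.fromRel_adj]
      tauto
    have hlt : G' < ⊤ := by
      rw [lt_top_iff_ne_top]
      intro h
      have h03 : G'.Adj ⟨0, by omega⟩ ⟨3, by omega⟩ := by
        rw [h]; simp [Fin.ext_iff]
      rw [hadj] at h03
      simp [Fin.ext_iff, hb, hc] at h03
    refine hmin G' hlt (dpdp_of G' ⟨0, by omega⟩ b c ?_ ?_ ?_ ?_ ?_ ?_)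
    · rw [hadj]; simp [Fin.ext_iff, hb, hc]
    · simp [Fin.ext_iff, hb]
    · simp [Fin.ext_iff, hc]
    · rw [hadj]; simp [Fin.ext_iff, hb, hc]
    · rw [hadj]; simp [Fin.ext_iff, hb, hc]
    · intro v hvb hvc
      rw [hadj]
      exact ⟨hvb, Or.inr (Or.inr (Or.inl rfl))⟩
  · rintro rfl
    constructor
    · exact dpdp_of ⊤ 0 1 2 (by decide) (by decide) (by decide) (by decide)
        (by decide) (fun v h1 h2 => by simp [h1])
    · rintro G' hlt ⟨D, P, hdisj, huniv, hDdom, hPdom, m, hm⟩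
      obtain ⟨p, hp⟩ : P.Nonempty := by
        by_contra hP
        rw [Set.not_nonempty_iff_eq_empty] at hP
        obtain ⟨u, hu, -⟩ := hPdom 0 (by simp [hP])
        simp [hP] at hu
      obtain ⟨hq, hpq, -⟩ := hm p hp
      have hpnq : p ≠ m p := hpq.ne
      have hpD : p ∉ D := Set.disjoint_right.mp hdisj hp
      have hqD : m p ∉ D := Set.disjoint_right.mp hdisj hq
      obtain ⟨u, hu, hpu⟩ := hDdom p hpD
      have hup : u ≠ p := fun e => hpD (e ▸ hu)
      have huq : u ≠ m p := fun e => hqD (e ▸ hu)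
      have huniv3 : ({u, p, m p} : Finset (Fin 3)) = Finset.univ := by
        apply Finset.eq_univ_of_card
        rw [Finset.card_insert_of_notMem (by simp [hup, huq]),
          Finset.card_insert_of_notMem (by simp [hpnq]), Finset.card_singleton]
        rfl
      have hmem : ∀ v : Fin 3, v = u ∨ v = p ∨ v = m p := by
        intro v
        have : v ∈ ({u, p, m p} : Finset (Fin 3)) := huniv3 ▸ Finset.mem_univ v
        simpa using this
      obtain ⟨u', hu', hqu'⟩ := hDdom (m p) hqD
      have hu'u : u' = u := by
        rcases hmem u' with h | h | h
        · exact h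
        · exact absurd (h ▸ hu') hpD
        · exact absurd (h ▸ hu') hqD
      rw [hu'u] at hqu'
      -- now G' contains all three edges p-mp, p-u, mp-u, so G' = ⊤
      have : G' = ⊤ := by
        ext v w
        simp only [top_adj]
        constructor
        · exact fun h => h.ne
        · intro hvw
          rcases hmem v with hv | hv | hv <;> rcases hmem w with hw | hw | hw <;>
            subst hv <;> subst hw <;>
            first
            | exact absurd rfl hvw
            | exact hpu | exact hpu.symm | exact hqu' | exact hqu'.symm
            | exact hpq | exact hpq.symm
      exact absurd this (ne_of_lt hlt)
end

section
/- Let H be a simple graph without isolated vertices, and let x, y be adjacent vertices of degree 2 in H with other neighbors x' and y' respectively (x' ≠ y, y' ≠ x). If x' has a neighbor outside {x, y} and y' has a neighbor outside {x, y}, then the double subdivision S_2(H) is a DPDP-graph but not a minimal DPDP-graph. -/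
open SimpleGraph

variable {V : Type*}

/-!
The original vertices of `S₂(H)` dominate it, since every subdivision vertex hangs on one, and
the subdivision vertices form a paired-dominating set: they are matched along the middle edges
`u_e v_e`, and they dominate because `H` has no isolated vertices.

To see that `S₂(H)` is not minimal, delete the middle edge `x_e y_e` of the subdivided edge
`e = xy`. Now `x` and `y` go to the paired side, matched with their subdivision neighbours on
`xx'` and `yy'`; `x_e`, `y_e` and the far ends `x'_{xx'}`, `y'_{yy'}` of those two paths go to the
dominating side. Since `x` and `y` have degree 2 every subdivision vertex next to them is
dominated, and the neighbours of `x'`, `y'` outside `{x, y}` keep `x'` and `y'` dominated by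
the paired side.
-/

section DPPair

variable {G : SimpleGraph V}

lemma isDPPair_compl {D : Set V} (hD : Dominating G D) (hDc : Dominating G Dᶜ) {m : V → V}
    (hm : ∀ v ∈ Dᶜ, m v ∈ Dᶜ ∧ G.Adj v (m v) ∧ m (m v) = v) : IsDPPair G D Dᶜ :=
  ⟨disjoint_compl_right, Set.union_compl_self D, hD, hDc, m, hm⟩

lemma deleteEdges_singleton_lt {a b : V} (hab : G.Adj a b) : G.deleteEdges {s(a, b)} < G :=
  (deleteEdges_le _).lt_of_ne fun h =>
    Set.disjoint_singleton_right.mp (deleteEdges_eq_self.mp h) hab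

lemma not_isMinimalDPDP_of_isDPDP_deleteEdges {a b : V} (hab : G.Adj a b)
    (h : IsDPDP (G.deleteEdges {s(a, b)})) : ¬ IsMinimalDPDP G :=
  fun hmin => hmin.2 _ (deleteEdges_singleton_lt hab) h

end DPPair

namespace S2

variable {H : SimpleGraph V}

def reverse (e : {e : V × V // H.Adj e.1 e.2}) : {e : V × V // H.Adj e.1 e.2} :=
  ⟨e.1.swap, e.2.symm⟩

@[simp] lemma reverse_val (e : {e : V × V // H.Adj e.1 e.2}) : (reverse e).1 = e.1.swap := rfl

@[simp] lemma reverse_reverse (e : {e : V × V // H.Adj e.1 e.2}) : reverse (reverse e) = e := rfl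

@[simp] lemma adj_inl_inr {u : V} {e : {e : V × V // H.Adj e.1 e.2}} :
    (S2 H).Adj (.inl u) (.inr e) ↔ u = e.1.1 := Iff.rfl

@[simp] lemma adj_inr_inl {u : V} {e : {e : V × V // H.Adj e.1 e.2}} :
    (S2 H).Adj (.inr e) (.inl u) ↔ u = e.1.1 := Iff.rfl

@[simp] lemma adj_inr_inr {e f : {e : V × V // H.Adj e.1 e.2}} :
    (S2 H).Adj (.inr e) (.inr f) ↔ e.1.1 = f.1.2 ∧ e.1.2 = f.1.1 := Iff.rfl

lemma isDPPair_range_inl_range_inr (hiso : ∀ v, ∃ u, H.Adj v u) :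
    IsDPPair (S2 H) (Set.range Sum.inl) (Set.range Sum.inr) := by
  refine ⟨Set.isCompl_range_inl_range_inr.disjoint, Set.range_inl_union_range_inr,
    ?_, ?_, Sum.map id reverse, ?_⟩
  · rintro (u | e) hv
    · exact absurd (Set.mem_range_self u) hv
    · exact ⟨.inl e.1.1, Set.mem_range_self _, rfl⟩
  · rintro (u | e) hv
    · obtain ⟨w, hw⟩ := hiso u
      exact ⟨.inr ⟨(u, w), hw⟩, Set.mem_range_self _, rfl⟩
    · exact absurd (Set.mem_range_self e) hv
  · rintro _ ⟨e, rfl⟩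
    exact ⟨Set.mem_range_self _, ⟨rfl, rfl⟩, rfl⟩

theorem isDPDP (hiso : ∀ v, ∃ u, H.Adj v u) : IsDPDP (S2 H) :=
  ⟨_, _, isDPPair_range_inl_range_inr hiso⟩

section DeleteMiddleEdge

abbrev deleteMiddleEdge {x y : V} (hxy : H.Adj x y) :
    SimpleGraph (V ⊕ {e : V × V // H.Adj e.1 e.2}) :=
  (S2 H).deleteEdges {s(.inr ⟨(x, y), hxy⟩, .inr ⟨(y, x), hxy.symm⟩)}

def cutDominatingSet (x y x' y' : V) : Set (V ⊕ {e : V × V // H.Adj e.1 e.2}) :=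
  {v | match v with
    | .inl u => u ≠ x ∧ u ≠ y
    | .inr e => e.1 = (x, y) ∨ e.1 = (y, x) ∨ e.1 = (x', x) ∨ e.1 = (y', y)}

variable {x y x' y' : V}

@[simp] lemma inl_mem_cutDominatingSet {u : V} :
    (.inl u : V ⊕ {e : V × V // H.Adj e.1 e.2}) ∈ cutDominatingSet x y x' y' ↔
      u ≠ x ∧ u ≠ y :=
  Iff.rfl

@[simp] lemma inr_mem_cutDominatingSet {e : {e : V × V // H.Adj e.1 e.2}} :
    .inr e ∈ cutDominatingSet x y x' y' ↔
      e.1 = (x, y) ∨ e.1 = (y, x) ∨ e.1 = (x', x) ∨ e.1 = (y', y) :=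
  Iff.rfl

open Classical in
noncomputable def cutPairing (hxx' : H.Adj x x') (hyy' : H.Adj y y')
    (v : V ⊕ {e : V × V // H.Adj e.1 e.2}) : V ⊕ {e : V × V // H.Adj e.1 e.2} :=
  match v with
  | .inl u =>
    if u = x then .inr ⟨(x, x'), hxx'⟩ else if u = y then .inr ⟨(y, y'), hyy'⟩ else .inl u
  | .inr e => if e.1 = (x, x') then .inl x else if e.1 = (y, y') then .inl y else .inr (reverse e)

lemma dominating_cutDominatingSet (hxy : H.Adj x y) (hx : H.neighborSet x ⊆ {y, x'})
    (hy : H.neighborSet y ⊆ {x, y'}) :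
    Dominating (deleteMiddleEdge hxy) (cutDominatingSet x y x' y') := by
  rintro (u | ⟨⟨u, v⟩, huv⟩) hv
  · obtain rfl | rfl : u = x ∨ u = y := by simpa [or_iff_not_imp_left] using hv
    · exact ⟨.inr ⟨(u, y), hxy⟩, by simp, by simp⟩
    · exact ⟨.inr ⟨(u, x), hxy.symm⟩, by simp, by simp⟩
  · by_cases hu : u = x ∨ u = y
    · refine ⟨.inr (reverse ⟨(u, v), huv⟩), ?_, ?_⟩
      · rcases hu with rfl | rfl
        · rcases hx huv with rfl | rfl <;> simp_all
        · rcases hy huv with rfl | rfl <;> simp_all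
      · simp_all
    · exact ⟨.inl u, by simpa [not_or] using hu, by simp⟩

lemma exists_adj_ne_ne (hiso : ∀ v, ∃ u, H.Adj v u)
    (hx'n : ∃ z, H.Adj x' z ∧ z ≠ x ∧ z ≠ y)
    (hy'n : ∃ z, H.Adj y' z ∧ z ≠ x ∧ z ≠ y) (u : V) :
    ∃ w, H.Adj u w ∧ (u, w) ≠ (x', x) ∧ (u, w) ≠ (y', y) := by
  by_cases hux' : u = x'
  · obtain ⟨z, hz, hzx, hzy⟩ := hx'n
    exact ⟨z, hux' ▸ hz, by simp [hzx], by simp [hzy]⟩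
  by_cases huy' : u = y'
  · obtain ⟨z, hz, hzx, hzy⟩ := hy'n
    exact ⟨z, huy' ▸ hz, by simp [hzx], by simp [hzy]⟩
  obtain ⟨w, hw⟩ := hiso u
  exact ⟨w, hw, by simp [hux'], by simp [huy']⟩

lemma dominating_compl_cutDominatingSet (hxy : H.Adj x y) (hx' : x' ≠ y) (hy' : y' ≠ x)
    (hiso : ∀ v, ∃ u, H.Adj v u) (hx'n : ∃ z, H.Adj x' z ∧ z ≠ x ∧ z ≠ y)
    (hy'n : ∃ z, H.Adj y' z ∧ z ≠ x ∧ z ≠ y) :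
    Dominating (deleteMiddleEdge hxy) (cutDominatingSet x y x' y')ᶜ := by
  have hxy' := hxy.ne
  rintro (u | ⟨⟨u, v⟩, huv⟩) hv <;> rw [Set.notMem_compl_iff] at hv
  · obtain ⟨w, huw, hw⟩ := exists_adj_ne_ne hiso hx'n hy'n u
    exact ⟨.inr ⟨(u, w), huw⟩, by simp_all, by simp⟩
  · simp only [inr_mem_cutDominatingSet, Prod.mk.injEq] at hv
    rcases hv with ⟨rfl, rfl⟩ | ⟨rfl, rfl⟩ | ⟨rfl, rfl⟩ | ⟨rfl, rfl⟩
    · exact ⟨.inl u, by simp, by simp⟩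
    · exact ⟨.inl u, by simp, by simp⟩
    all_goals
      have huv' : u ≠ v := huv.ne
      exact ⟨.inr ⟨(v, u), huv.symm⟩, by simp_all [eq_comm], by simp_all [eq_comm]⟩

lemma cutPairing_inr {hxx' : H.Adj x x'} {hyy' : H.Adj y y'} {e : {e : V × V // H.Adj e.1 e.2}}
    (hex : e.1 ≠ (x, x')) (hey : e.1 ≠ (y, y')) :
    cutPairing hxx' hyy' (.inr e) = .inr (reverse e) := by
  simp [cutPairing, hex, hey]

lemma cutPairing_spec (hxy : H.Adj x y) (hxx' : H.Adj x x') (hyy' : H.Adj y y') (hx' : x' ≠ y)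
    (hy' : y' ≠ x) : ∀ v ∈ (cutDominatingSet x y x' y')ᶜ,
      cutPairing hxx' hyy' v ∈ (cutDominatingSet x y x' y')ᶜ ∧
      (deleteMiddleEdge hxy).Adj v (cutPairing hxx' hyy' v) ∧
      cutPairing hxx' hyy' (cutPairing hxx' hyy' v) = v := by
  have hxy' := hxy.ne
  have hxx'' := hxx'.ne
  have hyy'' := hyy'.ne
  rintro (u | e) hv <;> rw [Set.mem_compl_iff] at hv
  · obtain rfl | rfl : u = x ∨ u = y := by simpa [or_iff_not_imp_left] using hv
    · simp_all [cutPairing, eq_comm]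
    · simp_all [cutPairing, eq_comm]
  · by_cases hex : e.1 = (x, x')
    · obtain ⟨⟨_, _⟩, _⟩ := e
      obtain ⟨rfl, rfl⟩ := Prod.mk.inj hex
      simp [cutPairing, hxy', hx']
    by_cases hey : e.1 = (y, y')
    · obtain ⟨⟨_, _⟩, _⟩ := e
      obtain ⟨rfl, rfl⟩ := Prod.mk.inj hey
      simp [cutPairing, Ne.symm hxy', hy']
    simp only [inr_mem_cutDominatingSet, not_or] at hv
    have hrx : (reverse e).1 ≠ (x, x') := fun h => hv.2.2.1 (Prod.swap_eq_iff_eq_swap.mp h)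
    have hry : (reverse e).1 ≠ (y, y') := fun h => hv.2.2.2 (Prod.swap_eq_iff_eq_swap.mp h)
    rw [cutPairing_inr hex hey, cutPairing_inr hrx hry, reverse_reverse]
    obtain ⟨⟨u, v⟩, huv⟩ := e
    refine ⟨?_, ?_, rfl⟩
    · simp_all only [reverse, Set.mem_compl_iff, inr_mem_cutDominatingSet, Prod.swap_prod_mk,
        ne_eq, Prod.mk.injEq]
      tauto
    · simp_all

theorem isDPDP_deleteMiddleEdge (hiso : ∀ v, ∃ u, H.Adj v u) (hxy : H.Adj x y)
    (hx : H.neighborSet x = {y, x'}) (hx' : x' ≠ y)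
    (hy : H.neighborSet y = {x, y'}) (hy' : y' ≠ x)
    (hx'n : ∃ z, H.Adj x' z ∧ z ≠ x ∧ z ≠ y)
    (hy'n : ∃ z, H.Adj y' z ∧ z ≠ x ∧ z ≠ y) :
    IsDPDP (deleteMiddleEdge hxy) := by
  have hxx' : H.Adj x x' := by simp [← mem_neighborSet, hx]
  have hyy' : H.Adj y y' := by simp [← mem_neighborSet, hy]
  exact ⟨_, _, isDPPair_compl (dominating_cutDominatingSet hxy hx.subset hy.subset)
    (dominating_compl_cutDominatingSet hxy hx' hy' hiso hx'n hy'n)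
    (cutPairing_spec hxy hxx' hyy' hx' hy')⟩

end DeleteMiddleEdge

end S2

/-- If `x, y` are adjacent vertices of degree 2 in `H` (a graph without isolated
vertices) with remaining neighbors `x'` and `y'` respectively, and both `x'` and
`y'` have a neighbor outside `{x, y}`, then `S₂(H)` is a DPDP-graph but not a
minimal DPDP-graph. -/
theorem stmt15 {V : Type*} (H : SimpleGraph V) (x y x' y' : V)
    (hiso : ∀ v : V, ∃ u, H.Adj v u)
    (hxy : H.Adj x y)
    (hx : H.neighborSet x = {y, x'}) (hx' : x' ≠ y)
    (hy : H.neighborSet y = {x, y'}) (hy' : y' ≠ x)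
    (hx'n : ∃ z, H.Adj x' z ∧ z ≠ x ∧ z ≠ y)
    (hy'n : ∃ z, H.Adj y' z ∧ z ≠ x ∧ z ≠ y) :
    IsDPDP (S2 H) ∧ ¬ IsMinimalDPDP (S2 H) :=
  ⟨S2.isDPDP hiso, not_isMinimalDPDP_of_isDPDP_deleteEdges (S2.adj_inr_inr.mpr ⟨rfl, rfl⟩)
    (S2.isDPDP_deleteMiddleEdge hiso hxy hx hx' hy hy' hx'n hy'n)⟩
end

section
/- In any graph H, no leaf and no support vertex of H belongs to a good subgraph of H. -/
open SimpleGraph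

variable {V : Type*}

/-- The list of consecutive arcs of an oriented path given as a list of vertices. -/
def listArcs {V : Type*} (l : List V) : List (V × V) := l.zip l.tail

/-- `Q` is a good subgraph of `H`: `Q` has no isolated vertices and there is a
family of oriented paths `p v` (one starting at each vertex `v` of `Q`), pairwise
arc-disjoint and consistently oriented, using only edges of `H` outside `Q`,
whose arcs include an orientation of every edge of `H` incident with `Q` but not
in `Q`, such that: every vertex of `Q` has out-degree 1 and in-degree
`d_H(v) − d_Q(v) − 1`; every inner vertex `x` of a path has out-degree 1 and
in-degree `d_H(x) − 1`; and every terminal vertex `x` of a path has in-degree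
strictly less than `d_H(x)` (degrees of arcs being taken over the whole family). -/
def IsGoodSubgraph {V : Type*} [Fintype V] (H : SimpleGraph V) (Q : H.Subgraph) : Prop :=
  (∀ v ∈ Q.verts, ∃ u, Q.Adj v u) ∧
  ∃ p : V → List V,
    (∀ v ∈ Q.verts, (p v).head? = some v ∧ (p v).Nodup ∧ 2 ≤ (p v).length) ∧
    (∀ v ∈ Q.verts, ∀ a ∈ listArcs (p v), H.Adj a.1 a.2 ∧ ¬ Q.Adj a.1 a.2) ∧
    (∀ v ∈ Q.verts, ∀ w ∈ Q.verts, ∀ a ∈ listArcs (p v), ∀ b ∈ listArcs (p w),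
      (v ≠ w → a ≠ b) ∧ a ≠ (b.2, b.1)) ∧
    (∀ u w : V, H.Adj u w → u ∈ Q.verts → ¬ Q.Adj u w →
      ∃ v ∈ Q.verts, (u, w) ∈ listArcs (p v) ∨ (w, u) ∈ listArcs (p v)) ∧
    (let A : Set (V × V) := {a | ∃ v ∈ Q.verts, a ∈ listArcs (p v)}
     let outdeg : V → ℕ := fun x => ({w | (x, w) ∈ A} : Set V).ncard
     let indeg : V → ℕ := fun x => ({w | (w, x) ∈ A} : Set V).ncard
     (∀ v ∈ Q.verts, outdeg v = 1 ∧
        indeg v = (H.neighborSet v).ncard - (Q.neighborSet v).ncard - 1) ∧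
     (∀ v ∈ Q.verts, ∀ x ∈ p v, x ≠ v → (p v).getLast? ≠ some x →
        outdeg x = 1 ∧ indeg x = (H.neighborSet x).ncard - 1) ∧
     (∀ v ∈ Q.verts, ∀ x : V, (p v).getLast? = some x →
        indeg x < (H.neighborSet x).ncard))

/-!
A vertex `v` of a good subgraph `Q` has a neighbour in `Q` and also starts a path through an
edge outside `Q`, so `d_H(v) ≥ 2`. A vertex `x ≠ v` on the path `P_v` has a predecessor on it,
so its in-degree is positive; being inner or terminal, its in-degree is also less than `d_H(x)`,
so again `d_H(x) ≥ 2`. A leaf adjacent to a vertex of `Q` would lie either in `Q` or, through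
the path covering that edge, on some `P_v` without being its initial vertex.
-/

lemma mem_of_mem_listArcs {l : List V} {a b : V} (h : (a, b) ∈ listArcs l) : a ∈ l ∧ b ∈ l :=
  ⟨(List.of_mem_zip h).1, List.mem_of_mem_tail (List.of_mem_zip h).2⟩

lemma exists_mem_listArcs_of_ne_head {l : List V} {h x : V} (hl : l.head? = some h)
    (hx : x ∈ l) (hxh : x ≠ h) : ∃ y, (y, x) ∈ listArcs l := by
  obtain ⟨t, rfl⟩ : ∃ t, l = h :: t := List.head?_eq_some_iff.mp hl
  have hxt : x ∈ t := (List.mem_cons.mp hx).resolve_left hxh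
  clear hl hx hxh
  induction t generalizing h with
  | nil => simp at hxt
  | cons y t ih =>
    rcases List.mem_cons.mp hxt with rfl | hxt
    · exact ⟨h, List.mem_cons_self⟩
    · obtain ⟨z, hz⟩ := ih hxt
      exact ⟨z, List.mem_cons_of_mem _ hz⟩

namespace IsGoodSubgraph

variable [Fintype V] {H : SimpleGraph V} {Q : H.Subgraph}

lemma not_isLeaf_of_mem_verts (hQ : IsGoodSubgraph H Q) {v : V} (hv : v ∈ Q.verts) :
    ¬ IsLeaf H v := by
  obtain ⟨hiso, p, -, harc, -, -, hdeg, -, -⟩ := hQ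
  obtain ⟨u, hvu⟩ := hiso v hv
  obtain ⟨w, v', hv', hvw⟩ := Set.nonempty_of_ncard_ne_zero ((hdeg v hv).1.trans_ne one_ne_zero)
  obtain ⟨hHvw, hQvw⟩ := harc v' hv' _ hvw
  have hne : u ≠ w := by rintro rfl; exact hQvw hvu
  exact ((Set.one_lt_ncard_iff).2 ⟨u, w, Q.adj_sub hvu, hHvw, hne⟩).ne'

lemma not_isLeaf_of_adj (hQ : IsGoodSubgraph H Q) {v u : V} (hv : v ∈ Q.verts)
    (hvu : H.Adj v u) : ¬ IsLeaf H u := by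
  by_cases huQ : u ∈ Q.verts
  · exact hQ.not_isLeaf_of_mem_verts huQ
  obtain ⟨-, p, hpath, -, -, hcover, -, hinner, hterm⟩ := hQ
  obtain ⟨v', hv', hcov⟩ := hcover v u hvu hv fun h => huQ h.snd_mem
  have hu : u ∈ p v' := by
    rcases hcov with h | h
    exacts [(mem_of_mem_listArcs h).2, (mem_of_mem_listArcs h).1]
  have hne : u ≠ v' := by rintro rfl; exact huQ hv'
  obtain ⟨y, hy⟩ := exists_mem_listArcs_of_ne_head (hpath v' hv').1 hu hne
  have hin_pos : 0 < ({w | ∃ v ∈ Q.verts, (w, u) ∈ listArcs (p v)} : Set V).ncard :=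
    (Set.ncard_pos).2 ⟨y, v', hv', hy⟩
  have hin_lt : ({w | ∃ v ∈ Q.verts, (w, u) ∈ listArcs (p v)} : Set V).ncard
      < (H.neighborSet u).ncard := by
    by_cases hlast : (p v').getLast? = some u
    · exact hterm v' hv' u hlast
    · have hin_eq := (hinner v' hv' u hu hne hlast).2
      simp only [Set.mem_ofPred_eq] at hin_eq
      omega
  unfold IsLeaf
  omega

end IsGoodSubgraph

/-- No leaf and no support vertex of `H` belongs to a good subgraph of `H`. -/
theorem stmt16 {V : Type*} [Fintype V] (H : SimpleGraph V) (Q : H.Subgraph)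
    (hQ : IsGoodSubgraph H Q) :
    ∀ v ∈ Q.verts, ¬ IsLeaf H v ∧ ¬ IsSupport H v := by
  intro v hv
  refine ⟨hQ.not_isLeaf_of_mem_verts hv, ?_⟩
  rintro ⟨u, hvu, hu⟩
  exact hQ.not_isLeaf_of_adj hv hvu hu
end

section
/- Let H be a tree and Q a subtree of H. Then Q is a good subgraph of H if and only if no vertex in the closed neighborhood of V(Q) is a leaf of H and the subgraph of H induced by the closed neighborhood N_H[V(Q)] is isomorphic to the corona Q∘K_1 (each vertex of Q has exactly one neighbor outside Q, these outside neighbors are distinct and pairwise nonadjacent). -/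
open SimpleGraph

variable {V : Type*}

/-!
Deleting the edges of a connected subgraph `Q` of a forest `H` leaves the vertices of `Q`
pairwise disconnected, since two walks between distinct vertices of a forest share an edge.
Hence `Q` is induced, its outside neighbours are distinct and pairwise nonadjacent, and an
oriented path that leaves `Q` along edges outside `Q` never comes back to `Q`. In a good
subgraph every vertex `v` of `Q` therefore has in-degree `0`, so `d_H(v) = d_Q(v) + 1`: the
only outside neighbour of `v` is the second vertex of its path, which receives an arc and is
thus not a leaf. Conversely, the single arcs from each `v ∈ Q` to its outside neighbour
form a good family.
-/

theorem List.exists_eq_cons_cons_of_head?_eq {α : Type*} {l : List α} {a : α}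
    (h : l.head? = some a) (hl : 2 ≤ l.length) : ∃ b t, l = a :: b :: t := by
  obtain ⟨_ | ⟨b, t⟩, rfl⟩ := List.head?_eq_some_iff.mp h
  · simp at hl
  · exact ⟨b, t, rfl⟩

namespace SimpleGraph

variable {G : SimpleGraph V} {u v w : V}

lemma IsAcyclic.exists_mem_edges_of_ne (hG : G.IsAcyclic) (huv : u ≠ v) (p q : G.Walk u v) :
    ∃ e ∈ p.edges, e ∈ q.edges := by
  classical
  have hbypass : p.bypass = q.bypass := congrArg Subtype.val <|
    (hG.subsingleton_path u v).elim ⟨_, p.bypass_isPath⟩ ⟨_, q.bypass_isPath⟩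
  obtain ⟨e, he⟩ : ∃ e, e ∈ p.bypass.edges := by
    by_contra! h
    exact huv (Walk.edges_eq_nil.mp (List.eq_nil_iff_forall_not_mem.mpr h)).eq
  exact ⟨e, p.edges_bypass_subset_edges he, q.edges_bypass_subset_edges (hbypass ▸ he)⟩

lemma reachable_of_mem_of_forall_mem_listArcs {l : List V}
    (hl : ∀ a ∈ listArcs l, G.Adj a.1 a.2) (hu : u ∈ l) (hv : v ∈ l) : G.Reachable u v := by
  induction l generalizing u v with
  | nil => simp at hu
  | cons a t ih =>
    cases t with
    | nil => simp_all
    | cons b t =>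
      have hab : G.Reachable a b := (hl (a, b) List.mem_cons_self).reachable
      have ih' : ∀ {x y}, x ∈ b :: t → y ∈ b :: t → G.Reachable x y :=
        ih fun c hc => hl c (List.mem_cons_of_mem _ hc)
      rcases List.mem_cons.mp hu with rfl | hut <;> rcases List.mem_cons.mp hv with rfl | hvt
      · rfl
      · exact hab.trans (ih' List.mem_cons_self hvt)
      · exact (ih' hut List.mem_cons_self).trans hab.symm
      · exact ih' hut hvt

variable {H : SimpleGraph V} {Q : H.Subgraph} {u' x : V}

lemma Subgraph.deleteEdges_adj_of_not_adj (huv : H.Adj u v) (hQuv : ¬ Q.Adj u v) :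
    (H.deleteEdges Q.edgeSet).Adj u v :=
  SimpleGraph.deleteEdges_adj.mpr ⟨huv, fun he => hQuv (Q.mem_edgeSet.mp he)⟩

lemma Subgraph.deleteEdges_adj_of_notMem (hu : u ∉ Q.verts) (hvu : H.Adj v u) :
    (H.deleteEdges Q.edgeSet).Adj v u :=
  deleteEdges_adj_of_not_adj hvu fun h => hu h.snd_mem

theorem Subgraph.Connected.not_reachable_deleteEdges (hH : H.IsAcyclic) (hQ : Q.Connected)
    (hu : u ∈ Q.verts) (hv : v ∈ Q.verts) (huv : u ≠ v) :
    ¬ (H.deleteEdges Q.edgeSet).Reachable u v := by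
  rintro ⟨W⟩
  obtain ⟨R⟩ := hQ.preconnected ⟨u, hu⟩ ⟨v, hv⟩
  obtain ⟨e, heR, heW⟩ :=
    hH.exists_mem_edges_of_ne huv (R.map Q.hom) (W.mapLe (SimpleGraph.deleteEdges_le _))
  rw [Walk.edges_mapLe_eq_edges] at heW
  have := W.edges_subset_edgeSet heW
  rw [edgeSet_deleteEdges] at this
  obtain ⟨e', he', rfl⟩ := List.mem_map.mp ((R.edges_map Q.hom) ▸ heR)
  exact this.2 (by simpa using R.edges_subset_edgeSet he')

theorem Subgraph.Connected.adj_of_adj (hH : H.IsAcyclic) (hQ : Q.Connected)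
    (hu : u ∈ Q.verts) (hv : v ∈ Q.verts) (huv : H.Adj u v) : Q.Adj u v := by
  by_contra h
  exact hQ.not_reachable_deleteEdges hH hu hv huv.ne
    (Subgraph.deleteEdges_adj_of_not_adj huv h).reachable

theorem Subgraph.Connected.eq_of_adj_of_adj (hH : H.IsAcyclic) (hQ : Q.Connected)
    (hv : v ∈ Q.verts) (hw : w ∈ Q.verts) (hu : u ∉ Q.verts) (hvu : H.Adj v u)
    (hwu : H.Adj w u) : v = w := by
  by_contra hvw
  exact hQ.not_reachable_deleteEdges hH hv hw hvw <|
    (Subgraph.deleteEdges_adj_of_notMem hu hvu).reachable.trans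
      (Subgraph.deleteEdges_adj_of_notMem hu hwu).reachable.symm

theorem Subgraph.Connected.not_adj_of_adj_of_adj (hH : H.IsAcyclic) (hQ : Q.Connected)
    (hv : v ∈ Q.verts) (hw : w ∈ Q.verts) (hu : u ∉ Q.verts) (hu' : u' ∉ Q.verts)
    (hvu : H.Adj v u) (hwu' : H.Adj w u') : ¬ H.Adj u u' := by
  classical
  intro huu'
  obtain rfl | hvw := eq_or_ne v w
  · exact hH.cliqueFree le_rfl {v, u, u'} (is3Clique_triple_iff.mpr ⟨hvu, hwu', huu'⟩)
  · exact hQ.not_reachable_deleteEdges hH hv hw hvw <|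
      (Subgraph.deleteEdges_adj_of_notMem hu hvu).reachable.trans <|
        (Subgraph.deleteEdges_adj_of_notMem hu' huu').reachable.trans
          (Subgraph.deleteEdges_adj_of_notMem hu' hwu').reachable.symm

lemma Subgraph.ncard_neighborSet_eq_add [Finite V]
    (hind : ∀ w ∈ Q.verts, H.Adj v w → Q.Adj v w) :
    (H.neighborSet v).ncard =
      (Q.neighborSet v).ncard + {u | u ∉ Q.verts ∧ H.Adj v u}.ncard := by
  rw [← Set.ncard_union_eq]
  · congr 1
    ext u
    simp only [SimpleGraph.mem_neighborSet, Subgraph.mem_neighborSet, Set.mem_union,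
      Set.mem_ofPred_eq]
    by_cases hu : u ∈ Q.verts
    · simpa only [hu, not_true_eq_false, false_and, or_false] using ⟨hind u hu, Q.adj_sub⟩
    · simpa only [hu, not_false_eq_true, true_and] using (or_iff_right_of_imp Q.adj_sub).symm
  · exact Set.disjoint_left.mpr fun u hu hu' => hu'.1 (Q.edge_vert hu.symm)

lemma Subgraph.ncard_neighborSet_eq_add_one [Finite V]
    (hind : ∀ w ∈ Q.verts, H.Adj v w → Q.Adj v w)
    (huniq : ∃! u, u ∉ Q.verts ∧ H.Adj v u) :
    (H.neighborSet v).ncard = (Q.neighborSet v).ncard + 1 := by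
  obtain ⟨u, hu, hunique⟩ := huniq
  have hout : {u | u ∉ Q.verts ∧ H.Adj v u} = {u} :=
    Set.eq_singleton_iff_unique_mem.mpr ⟨hu, hunique⟩
  rw [ncard_neighborSet_eq_add hind, hout, Set.ncard_singleton]

theorem Subgraph.Connected.notMem_listArcs (hH : H.IsAcyclic) (hQ : Q.Connected) {l : List V}
    (hhead : l.head? = some w) (hl : l.Nodup) (hw : w ∈ Q.verts) (hv : v ∈ Q.verts)
    (harcs : ∀ a ∈ listArcs l, H.Adj a.1 a.2 ∧ ¬ Q.Adj a.1 a.2) :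
    (x, v) ∉ listArcs l := by
  intro hxv
  obtain ⟨t, rfl⟩ := List.head?_eq_some_iff.mp hhead
  have hvt : v ∈ t := (List.of_mem_zip hxv).2
  have hwv : w ≠ v := (ne_of_mem_of_not_mem hvt (List.nodup_cons.mp hl).1).symm
  refine hQ.not_reachable_deleteEdges hH hw hv hwv ?_
  exact reachable_of_mem_of_forall_mem_listArcs
    (fun a ha => Subgraph.deleteEdges_adj_of_not_adj (harcs a ha).1 (harcs a ha).2)
    List.mem_cons_self (List.mem_cons_of_mem _ hvt)

end SimpleGraph

section

variable {S : Set V} {m : V → V} {a : V × V} {v : V}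

def pairArcs (S : Set V) (m : V → V) : Set (V × V) := {a | ∃ v ∈ S, a ∈ listArcs [v, m v]}

lemma mem_pairArcs : a ∈ pairArcs S m ↔ ∃ v ∈ S, a = (v, m v) := by
  simp [pairArcs, listArcs]

lemma setOf_fst_mem_pairArcs (hv : v ∈ S) : {w | (v, w) ∈ pairArcs S m} = {m v} := by
  ext w
  simp [mem_pairArcs, hv]

lemma setOf_snd_mem_pairArcs_eq_empty (hmS : ∀ x ∈ S, m x ∉ S) (hv : v ∈ S) :
    {w | (w, v) ∈ pairArcs S m} = ∅ := by
  ext w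
  simp only [Set.mem_ofPred_eq, mem_pairArcs, Prod.mk.injEq, Set.mem_empty_iff_false, iff_false]
  rintro ⟨x, hx, rfl, rfl⟩
  exact hmS w hx hv

lemma setOf_snd_mem_pairArcs_apply (hm : Set.InjOn m S) (hv : v ∈ S) :
    {w | (w, m v) ∈ pairArcs S m} = {v} := by
  ext w
  simp only [Set.mem_ofPred_eq, mem_pairArcs, Prod.mk.injEq, Set.mem_singleton_iff]
  constructor
  · rintro ⟨x, hx, rfl, hmx⟩
    exact hm hx hv hmx.symm
  · rintro rfl
    exact ⟨w, hv, rfl, rfl⟩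

end

section

variable {H : SimpleGraph V} {Q : H.Subgraph}

theorem IsGoodSubgraph.not_isLeaf_and_existsUnique [Fintype V] (hH : H.IsAcyclic)
    (hQ : Q.Connected) (hgood : IsGoodSubgraph H Q) :
    (∀ u ∈ Q.verts ∪ {u | ∃ v ∈ Q.verts, H.Adj v u}, ¬ IsLeaf H u) ∧
      ∀ v ∈ Q.verts, ∃! u, u ∉ Q.verts ∧ H.Adj v u := by
  obtain ⟨hiso, p, hstart, harcs, -, -, hdegQ, hinner, hlast⟩ := hgood
  set A : Set (V × V) := {a | ∃ v ∈ Q.verts, a ∈ listArcs (p v)}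
  beta_reduce at hdegQ hinner hlast
  have hsnd : ∀ v ∈ Q.verts, ∃ s t, p v = v :: s :: t ∧ s ∉ Q.verts ∧ H.Adj v s := by
    intro v hv
    obtain ⟨s, t, ht⟩ := List.exists_eq_cons_cons_of_head?_eq (hstart v hv).1 (hstart v hv).2.2
    obtain ⟨hvs, hQvs⟩ := harcs v hv (v, s) (by simp [ht, listArcs])
    exact ⟨s, t, ht, fun hs => hQvs (hQ.adj_of_adj hH hv hs hvs), hvs⟩
  -- no path re-enters `Q`, so the vertices of `Q` have in-degree `0`
  have huniq : ∀ v ∈ Q.verts, ∃! u, u ∉ Q.verts ∧ H.Adj v u := by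
    intro v hv
    obtain ⟨s, -, -, hs, hvs⟩ := hsnd v hv
    have hindeg := (hdegQ v hv).2
    have hnone : {w | (w, v) ∈ A} = ∅ := Set.eq_empty_of_forall_notMem fun w ⟨u, hu, hwv⟩ =>
      hQ.notMem_listArcs hH (hstart u hu).1 (hstart u hu).2.1 hu hv (harcs u hu) hwv
    rw [hnone, Set.ncard_empty] at hindeg
    have hdeg := Subgraph.ncard_neighborSet_eq_add fun w hw => hQ.adj_of_adj hH hv hw
    have hsub : {u | u ∉ Q.verts ∧ H.Adj v u}.Subsingleton :=
      Set.ncard_le_one_iff_subsingleton.mp (by omega)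
    exact ⟨s, ⟨hs, hvs⟩, fun u hu => hsub hu ⟨hs, hvs⟩⟩
  refine ⟨fun u hu hleaf => ?_, huniq⟩
  rw [IsLeaf] at hleaf
  by_cases huQ : u ∈ Q.verts
  · have hdeg := Subgraph.ncard_neighborSet_eq_add_one (fun w hw => hQ.adj_of_adj hH huQ hw)
      (huniq u huQ)
    obtain ⟨x, hx⟩ := hiso u huQ
    have : 0 < (Q.neighborSet u).ncard := (Set.ncard_pos (Set.toFinite _)).mpr ⟨x, hx⟩
    omega
  obtain ⟨v, hv, hvu⟩ : ∃ v ∈ Q.verts, H.Adj v u := hu.resolve_left huQ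
  obtain ⟨s, t, hpv, hs, hvs⟩ := hsnd v hv
  obtain rfl : u = s := (huniq v hv).unique ⟨huQ, hvu⟩ ⟨hs, hvs⟩
  have hin : 0 < {w | (w, u) ∈ A}.ncard :=
    (Set.ncard_pos (Set.toFinite _)).mpr ⟨v, v, hv, by simp [hpv, listArcs]⟩
  rcases t with _ | ⟨y, t⟩
  · have := hlast v hv u (by simp [hpv])
    omega
  · have hnd := (hstart v hv).2.1
    rw [hpv, List.nodup_cons, List.nodup_cons] at hnd
    have hnotLast : (p v).getLast? ≠ some u := fun h => hnd.2.1 <|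
      List.mem_of_getLast? (by rwa [hpv, List.getLast?_cons_cons, List.getLast?_cons_cons] at h)
    have := (hinner v hv u (by simp [hpv]) (ne_of_mem_of_not_mem hv huQ).symm hnotLast).2
    omega

theorem isGoodSubgraph_of_not_isLeaf_of_existsUnique [Fintype V] (hH : H.IsAcyclic)
    (hQ : Q.Connected)
    (hleaf : ∀ u ∈ Q.verts ∪ {u | ∃ v ∈ Q.verts, H.Adj v u}, ¬ IsLeaf H u)
    (huniq : ∀ v ∈ Q.verts, ∃! u, u ∉ Q.verts ∧ H.Adj v u) :
    IsGoodSubgraph H Q := by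
  choose! m hmQ hm using fun v hv => (huniq v hv).exists
  have hdeg : ∀ v ∈ Q.verts, (H.neighborSet v).ncard = (Q.neighborSet v).ncard + 1 :=
    fun v hv => Subgraph.ncard_neighborSet_eq_add_one (fun w hw => hQ.adj_of_adj hH hv hw)
      (huniq v hv)
  have hmv : ∀ v ∈ Q.verts, m v ≠ v := fun v hv h => hmQ v hv (h.symm ▸ hv)
  refine ⟨fun v hv => ?_, fun v => [v, m v],
    fun v hv => ⟨rfl, by simpa using (hmv v hv).symm, le_rfl⟩, fun v hv a ha => ?_,
    fun v hv w hw a ha b hb => ?_, fun u w huw hu hQuw => ?_, ?_⟩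
  · have hnleaf := hleaf v (Or.inl hv)
    rw [IsLeaf, hdeg v hv] at hnleaf
    exact (Set.ncard_pos (s := Q.neighborSet v) (Set.toFinite _)).mp (by omega)
  · obtain rfl : a = (v, m v) := by simpa [listArcs] using ha
    exact ⟨hm v hv, fun h => hmQ v hv h.snd_mem⟩
  · obtain rfl : a = (v, m v) := by simpa [listArcs] using ha
    obtain rfl : b = (w, m w) := by simpa [listArcs] using hb
    exact ⟨fun hvw h => hvw (congrArg Prod.fst h), fun h => hmQ w hw (by
      simp only [Prod.mk.injEq] at h
      exact h.1 ▸ hv)⟩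
  · have hw : w ∉ Q.verts := fun hw => hQuw (hQ.adj_of_adj hH hu hw huw)
    have hwm : w = m u := (huniq u hu).unique ⟨hw, huw⟩ ⟨hmQ u hu, hm u hu⟩
    exact ⟨u, hu, Or.inl (by simp [listArcs, hwm])⟩
  intro A outdeg indeg
  have hinj : Set.InjOn m Q.verts := fun x hx y hy hxy =>
    hQ.eq_of_adj_of_adj hH hx hy (hmQ x hx) (hm x hx) (hxy ▸ hm y hy)
  refine ⟨fun v hv => ⟨?_, ?_⟩, fun v hv x hx hxv hxl => ?_, fun v hv x hx => ?_⟩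
  · show {w | (v, w) ∈ pairArcs Q.verts m}.ncard = 1
    rw [setOf_fst_mem_pairArcs hv, Set.ncard_singleton]
  · show {w | (w, v) ∈ pairArcs Q.verts m}.ncard = _
    rw [setOf_snd_mem_pairArcs_eq_empty hmQ hv, Set.ncard_empty, hdeg v hv]
    omega
  · rcases List.mem_pair.mp hx with rfl | rfl
    · exact absurd rfl hxv
    · exact absurd rfl hxl
  · obtain rfl : m v = x := by simpa using hx
    show {w | (w, m v) ∈ pairArcs Q.verts m}.ncard < _
    have hnleaf := hleaf (m v) (Or.inr ⟨v, hv, hm v hv⟩)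
    have hpos : 0 < (H.neighborSet (m v)).ncard :=
      (Set.ncard_pos (Set.toFinite _)).mpr ⟨v, (hm v hv).symm⟩
    rw [IsLeaf] at hnleaf
    rw [setOf_snd_mem_pairArcs_apply hinj hv, Set.ncard_singleton]
    omega

end

/-- For a subtree `Q` of a tree `H`: `Q` is a good subgraph of `H` if and only if
no vertex of the closed neighborhood of `V(Q)` is a leaf of `H` and the subgraph
induced by this closed neighborhood is the corona `Q ∘ K₁`: every vertex of `Q`
has exactly one neighbor outside `Q`, and these outside neighbors are distinct
and pairwise nonadjacent. -/
theorem stmt18 {V : Type*} [Fintype V] (H : SimpleGraph V) (hH : H.IsTree)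
    (Q : H.Subgraph) (hQconn : Q.Connected) :
    IsGoodSubgraph H Q ↔
      ((∀ u ∈ Q.verts ∪ {u | ∃ v ∈ Q.verts, H.Adj v u}, ¬ IsLeaf H u) ∧
       (∀ v ∈ Q.verts, ∃! u, u ∉ Q.verts ∧ H.Adj v u) ∧
       (∀ v ∈ Q.verts, ∀ w ∈ Q.verts, ∀ u u' : V,
          u ∉ Q.verts → H.Adj v u → u' ∉ Q.verts → H.Adj w u' →
          (v ≠ w → u ≠ u') ∧ ¬ H.Adj u u')) := by
  refine ⟨fun hgood => ?_, fun ⟨hleaf, huniq, _⟩ =>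
    isGoodSubgraph_of_not_isLeaf_of_existsUnique hH.isAcyclic hQconn hleaf huniq⟩
  obtain ⟨hleaf, huniq⟩ := hgood.not_isLeaf_and_existsUnique hH.isAcyclic hQconn
  refine ⟨hleaf, huniq, fun v hv w hw u u' hu hvu hu' hwu' => ⟨fun hvw huu' => ?_,
    hQconn.not_adj_of_adj_of_adj hH.isAcyclic hv hw hu hu' hvu hwu'⟩⟩
  subst huu'
  exact hvw (hQconn.eq_of_adj_of_adj hH.isAcyclic hv hw hu hvu hwu')
end
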